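/- arXiv:1807.08658 — 10 statements merged into one kernel-verified Lean document; each statement's English description precedes it below -/
import Mathlib

section
/- Let a = (a_1, a_2, ...) be a non-decreasing sequence of real numbers and let e = (e_1, e_2, ...) be a real sequence that is a restricted growth sequence relative to a. Then the infinite lower-triangular matrix S^{a,e} = [S^{a,e}(m,k)]_{m,k ≥ 0} is totally non-negative, i.e., every minor (the determinant of any square submatrix obtained by selecting finitely many rows and the same number of columns) is non-negative. -/
/-!
Peeling off the first factor `x - e₁` of `∏ (x - eᵢ)` and using
`(x - e₁) Pₖ = Pₖ₊₁ + (aₖ₊₁ - e₁) Pₖ` for the Newton polynomials `Pₖ = ∏_{i ≤ k} (x - aᵢ)`,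
row `m + 1` of `S^{a,e}` is row `m` of a matrix `U` times an upper bidiagonal matrix with ones
above the diagonal and non-negative entries on it. If `e₁ < a₁`, then `U = S^{a,e'}` with
diagonal `aₖ₊₁ - e₁`; if `e₁ = a₁`, then `U = S^{a',e'}` with zero diagonal (`a'`, `e'` the
shifted sequences). In both cases the new pair is again non-decreasing / restricted growth, so by
induction on the number of rows all minors of `U` are non-negative. Multiplying by such a
bidiagonal matrix preserves this: expanding each column by multilinearity, every term is a
minor with weakly increasing columns, which vanishes unless they increase strictly. Row `0` is
`(1, 0, 0, …)` and is removed by Laplace expansion.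
-/

open Polynomial Finset

/-- The numbers `S^{a,e}(m,k)` (0-indexed: `a i`, `e i` denote `a_{i+1}`, `e_{i+1}`),
uniquely determined by `∏_{i=1}^m (x - e_i) = ∑_{k=0}^m S^{a,e}(m,k) ∏_{i=1}^k (x - a_i)`
together with `S^{a,e}(m,k) = 0` for `k > m`. -/
def SaeRel (a e : ℕ → ℝ) (S : ℕ → ℕ → ℝ) : Prop :=
  (∀ m k : ℕ, m < k → S m k = 0) ∧
  ∀ m : ℕ, ∏ i ∈ Finset.range m, (X - C (e i)) =
    ∑ k ∈ Finset.range (m + 1), C (S m k) * ∏ i ∈ Finset.range k, (X - C (a i))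

/-- The cap-index function for restricted growth: `rgsF a e i` is the (0-indexed)
index of the cap for `e i`; the cap for `e 0` is `a 0`, and the cap index increments
exactly when equality with the cap holds. -/
noncomputable def rgsF (a e : ℕ → ℝ) : ℕ → ℕ
  | 0 => 0
  | i + 1 => if e i = a (rgsF a e i) then rgsF a e i + 1 else rgsF a e i

/-- `e` is a restricted growth sequence relative to `a`. -/
def IsRGS (a e : ℕ → ℝ) : Prop := ∀ i : ℕ, e i ≤ a (rgsF a e i)

/-- An infinite matrix (rows and columns indexed by `ℕ`) is totally non-negative if
every minor is non-negative. -/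
def TotallyNonneg (M : ℕ → ℕ → ℝ) : Prop :=
  ∀ (p : ℕ) (r c : Fin p → ℕ), StrictMono r → StrictMono c →
    0 ≤ (Matrix.of fun i j => M (r i) (c j)).det

noncomputable def newtonBasis {R : Type*} [CommRing R] [IsDomain R] (a : ℕ → R) :
    Polynomial.Sequence R where
  elems' k := ∏ i ∈ range k, (X - C (a i))
  degree_eq' k := by simp [degree_prod]

theorem eq_of_sum_C_mul_prod_X_sub_C_eq {R : Type*} [CommRing R] [IsDomain R] {a d d' : ℕ → R}
    {n : ℕ}
    (h : ∑ k ∈ range n, C (d k) * ∏ i ∈ range k, (X - C (a i)) =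
      ∑ k ∈ range n, C (d' k) * ∏ i ∈ range k, (X - C (a i))) :
    ∀ k < n, d k = d' k := by
  intro k hk
  have hzero : ∑ k ∈ range n, (d k - d' k) • newtonBasis a k = 0 := by
    simp only [sub_smul, sum_sub_distrib, ← C_mul']
    exact sub_eq_zero.mpr h
  have := linearIndependent_iff'.mp (newtonBasis a).linearIndependent _ _ hzero k (mem_range.mpr hk)
  exact sub_eq_zero.mp this

theorem SaeRel.unique {a e : ℕ → ℝ} {S T : ℕ → ℕ → ℝ} (hS : SaeRel a e S) (hT : SaeRel a e T) :
    S = T := by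
  funext m k
  rcases lt_or_ge m k with hmk | hkm
  · rw [hS.1 m k hmk, hT.1 m k hmk]
  · exact eq_of_sum_C_mul_prod_X_sub_C_eq ((hS.2 m).symm.trans (hT.2 m)) k (by omega)

theorem X_sub_C_mul_prod_X_sub_C {R : Type*} [CommRing R] (a : ℕ → R) (b : R) (k : ℕ) :
    (X - C b) * ∏ i ∈ range k, (X - C (a i)) =
      ∏ i ∈ range (k + 1), (X - C (a i)) + C (a k - b) * ∏ i ∈ range k, (X - C (a i)) := by
  rw [prod_range_succ, C_sub]
  ring

noncomputable def connectionCoeff (a : ℕ → ℝ) : (ℕ → ℝ) → ℕ → ℕ → ℝ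
  | _, 0, 0 => 1
  | _, 0, _ + 1 => 0
  | e, m + 1, 0 => (a 0 - e 0) * connectionCoeff a (fun i => e (i + 1)) m 0
  | e, m + 1, k + 1 => connectionCoeff a (fun i => e (i + 1)) m k +
      (a (k + 1) - e 0) * connectionCoeff a (fun i => e (i + 1)) m (k + 1)

theorem connectionCoeff_eq_zero_of_lt {a e : ℕ → ℝ} {m k : ℕ} (h : m < k) :
    connectionCoeff a e m k = 0 := by
  induction m generalizing e k with
  | zero => cases k <;> first | omega | rfl
  | succ m ih =>
    cases k with
    | zero => omega
    | succ k => simp only [connectionCoeff, ih (show m < k by omega), ih (show m < k + 1 by omega),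
        mul_zero, add_zero]

theorem saeRel_connectionCoeff (a e : ℕ → ℝ) : SaeRel a e (connectionCoeff a e) := by
  refine ⟨fun m k => connectionCoeff_eq_zero_of_lt, fun m => ?_⟩
  induction m generalizing e with
  | zero => simp [connectionCoeff]
  | succ m ih =>
    set T := connectionCoeff a (fun i => e (i + 1)) m
    have hT : T (m + 1) = 0 := connectionCoeff_eq_zero_of_lt (by omega)
    have hterm : ∀ k, C (T k) * (∏ i ∈ range k, (X - C (a i))) * (X - C (e 0)) =
        C (T k) * ∏ i ∈ range (k + 1), (X - C (a i)) +
          C ((a k - e 0) * T k) * ∏ i ∈ range k, (X - C (a i)) := by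
      intro k
      rw [mul_assoc, mul_comm _ (X - C _), X_sub_C_mul_prod_X_sub_C, C_mul]
      ring
    calc ∏ i ∈ range (m + 1), (X - C (e i))
        = (∑ k ∈ range (m + 1), C (T k) * ∏ i ∈ range k, (X - C (a i))) * (X - C (e 0)) := by
          rw [prod_range_succ', ih]
      _ = ∑ k ∈ range (m + 1), C (T k) * ∏ i ∈ range (k + 1), (X - C (a i)) +
            ∑ k ∈ range (m + 2), C ((a k - e 0) * T k) * ∏ i ∈ range k, (X - C (a i)) := by
          rw [sum_mul, sum_congr rfl fun k _ => hterm k, sum_add_distrib, sum_range_succ _ (m + 1),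
            hT, mul_zero, C_0, zero_mul, add_zero]
      _ = ∑ k ∈ range (m + 2),
            C (connectionCoeff a e (m + 1) k) * ∏ i ∈ range k, (X - C (a i)) := by
          rw [sum_range_succ' (fun k => C (connectionCoeff a e (m + 1) k) * _),
            sum_range_succ' (fun k => C ((a k - e 0) * T k) * _)]
          simp only [connectionCoeff, C_add, add_mul, sum_add_distrib, T]
          ring

theorem connectionCoeff_succ_succ_of_eq {a e : ℕ → ℝ} (h : e 0 = a 0) (m k : ℕ) :
    connectionCoeff a e (m + 1) (k + 1) =
      connectionCoeff (fun i => a (i + 1)) (fun i => e (i + 1)) m k := by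
  rcases lt_or_ge m k with hmk | hkm
  · rw [connectionCoeff_eq_zero_of_lt (by omega), connectionCoeff_eq_zero_of_lt hmk]
  have hexp : (∑ k ∈ range (m + 1), C (connectionCoeff a e (m + 1) (k + 1)) *
        ∏ i ∈ range k, (X - C (a (i + 1)))) * (X - C (a 0)) =
      (∑ k ∈ range (m + 1), C (connectionCoeff (fun i => a (i + 1)) (fun i => e (i + 1)) m k) *
        ∏ i ∈ range k, (X - C (a (i + 1)))) * (X - C (a 0)) :=
    calc _ = ∑ k ∈ range (m + 2), C (connectionCoeff a e (m + 1) k) *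
          ∏ i ∈ range k, (X - C (a i)) := by
          rw [sum_range_succ' (fun k => C (connectionCoeff a e (m + 1) k) * _), sum_mul]
          simp [connectionCoeff, h, prod_range_succ', mul_assoc]
      _ = ∏ i ∈ range (m + 1), (X - C (e i)) := ((saeRel_connectionCoeff a e).2 (m + 1)).symm
      _ = _ := by rw [prod_range_succ', (saeRel_connectionCoeff _ _).2 m, h]
  exact eq_of_sum_C_mul_prod_X_sub_C_eq (mul_right_cancel₀ (X_sub_C_ne_zero _) hexp) k (by omega)

theorem rgsF_tail_of_ne {a e : ℕ → ℝ} (h : e 0 ≠ a 0) (i : ℕ) :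
    rgsF a (fun j => e (j + 1)) i = rgsF a e (i + 1) := by
  induction i with
  | zero => simp [rgsF, h]
  | succ i ih => rw [rgsF.eq_2 a _ i, ih, rgsF.eq_2 a e (i + 1)]

theorem rgsF_tail_of_eq {a e : ℕ → ℝ} (h : e 0 = a 0) (i : ℕ) :
    rgsF (fun j => a (j + 1)) (fun j => e (j + 1)) i + 1 = rgsF a e (i + 1) := by
  induction i with
  | zero => simp [rgsF, h]
  | succ i ih =>
    rw [rgsF.eq_2 (fun j => a (j + 1)) _ i, rgsF.eq_2 a e (i + 1), ← ih]
    split_ifs <;> rfl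

theorem IsRGS.tail_of_ne {a e : ℕ → ℝ} (he : IsRGS a e) (h : e 0 ≠ a 0) :
    IsRGS a (fun j => e (j + 1)) := fun i => by
  simpa only [IsRGS, rgsF_tail_of_ne h] using he (i + 1)

theorem IsRGS.tail_of_eq {a e : ℕ → ℝ} (he : IsRGS a e) (h : e 0 = a 0) :
    IsRGS (fun j => a (j + 1)) (fun j => e (j + 1)) := fun i => by
  simpa only [rgsF_tail_of_eq h] using he (i + 1)

theorem det_nonneg_of_sorted_combination {R : Type*} [CommRing R] [PartialOrder R]
    [IsOrderedRing R] {p : ℕ} (B : Fin p → ℕ → R)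
    (hB : ∀ d : Fin p → ℕ, StrictMono d → 0 ≤ (Matrix.of fun i j => B i (d j)).det)
    (s : Fin p → Finset ℕ) (hs : ∀ j j', j < j' → ∀ l ∈ s j, ∀ l' ∈ s j', l ≤ l')
    (w : Fin p → ℕ → R) (hw : ∀ j l, 0 ≤ w j l) :
    0 ≤ (Matrix.of fun i j => ∑ l ∈ s j, w j l * B i l).det := by
  have hcols : Matrix.transpose (Matrix.of fun i j => ∑ l ∈ s j, w j l * B i l) =
      fun j => ∑ l ∈ s j, w j l • fun i => B i l := by
    ext j i; simp [Finset.sum_apply]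
  rw [← Matrix.det_transpose, hcols]
  change 0 ≤ Matrix.detRowAlternating _
  rw [← AlternatingMap.coe_multilinearMap, MultilinearMap.map_sum_finset]
  refine Finset.sum_nonneg fun r hr => ?_
  rw [MultilinearMap.map_smul_univ]
  refine mul_nonneg (Finset.prod_nonneg fun j _ => hw j (r j)) ?_
  have hmono : Monotone r := fun j j' hjj' => by
    rcases hjj'.lt_or_eq with hlt | rfl
    · exact hs j j' hlt _ (Fintype.mem_piFinset.mp hr j) _ (Fintype.mem_piFinset.mp hr j')
    · rfl
  change 0 ≤ (Matrix.transpose (Matrix.of fun i j => B i (r j))).det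
  rw [Matrix.det_transpose]
  by_cases hinj : Function.Injective r
  · exact hB r (hmono.strictMono_of_injective hinj)
  · obtain ⟨j, j', hrj, hne⟩ : ∃ j j', r j = r j' ∧ j ≠ j' := by
      simpa [Function.Injective] using hinj
    rw [Matrix.det_zero_of_column_eq hne fun i => by simp [hrj]]

def TotallyNonnegBelow (M : ℕ → ℕ → ℝ) (N : ℕ) : Prop :=
  ∀ (p : ℕ) (r c : Fin p → ℕ), StrictMono r → StrictMono c → (∀ i, r i < N) →
    0 ≤ (Matrix.of fun i j => M (r i) (c j)).det

theorem totallyNonnegBelow_zero (M : ℕ → ℕ → ℝ) : TotallyNonnegBelow M 0 := by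
  intro p r c _ _ hr
  cases p with
  | zero => simp
  | succ p => exact absurd (hr 0) (Nat.not_lt_zero _)

theorem TotallyNonnegBelow.succ_of_row_zero {M : ℕ → ℕ → ℝ} {N : ℕ}
    (hM0 : ∀ k, 0 < k → M 0 k = 0) (h00 : 0 ≤ M 0 0)
    (h : TotallyNonnegBelow (fun m k => M (m + 1) k) N) : TotallyNonnegBelow M (N + 1) := by
  have hpos : ∀ (p : ℕ) (r c : Fin p → ℕ), StrictMono r → StrictMono c → (∀ i, r i < N + 1) →
      (∀ i, 0 < r i) → 0 ≤ (Matrix.of fun i j => M (r i) (c j)).det := by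
    intro p r c hr hc hrN hr0
    have hdrop := h p (fun i => r i - 1) c
      (fun i j hij => show r i - 1 < r j - 1 by have := hr hij; have := hr0 i; omega)
      hc (fun i => show r i - 1 < N by have := hrN i; have := hr0 i; omega)
    simpa only [Nat.sub_add_cancel (hr0 _)] using hdrop
  intro p r c hr hc hrN
  cases p with
  | zero => simp
  | succ p =>
    rcases Nat.eq_zero_or_pos (r 0) with hr0 | hr0
    · rw [Matrix.det_succ_row_zero, Fintype.sum_eq_single 0]
      · have hcorner : 0 ≤ M (r 0) (c 0) := by
          rcases Nat.eq_zero_or_pos (c 0) with hc0 | hc0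
          · rwa [hr0, hc0]
          · rw [hr0, hM0 _ hc0]
        simp only [Fin.val_zero, pow_zero, one_mul, Fin.succAbove_zero, Matrix.of_apply]
        exact mul_nonneg hcorner (hpos p (fun i => r i.succ) (fun j => c j.succ)
          (hr.comp Fin.strictMono_succ) (hc.comp Fin.strictMono_succ) (fun i => hrN _)
          fun i => hr0 ▸ hr (Fin.succ_pos i))
      · intro j hj
        have : 0 < c j := lt_of_le_of_lt (Nat.zero_le _) (hc (Fin.pos_iff_ne_zero.mpr hj))
        simp [hr0, hM0 _ this]
    · exact hpos _ r c hr hc hrN fun i => lt_of_lt_of_le hr0 (hr.monotone (Fin.zero_le i))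

theorem TotallyNonnegBelow.of_bidiagonal {U M : ℕ → ℕ → ℝ} {N : ℕ} (hU : TotallyNonnegBelow U N)
    {w : ℕ → ℝ} (hw : ∀ k, 0 ≤ w k) (hM0 : ∀ m, M m 0 = w 0 * U m 0)
    (hM : ∀ m k, M m (k + 1) = U m k + w (k + 1) * U m (k + 1)) : TotallyNonnegBelow M N := by
  -- for `k = 0` the support `Icc (k - 1) k` is `{0}` by truncated subtraction
  have hsum : ∀ m k, M m k = ∑ l ∈ Icc (k - 1) k, (if l = k then w k else 1) * U m l := by
    intro m k
    cases k with
    | zero => simp [hM0]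
    | succ k =>
      rw [hM, show Icc (k + 1 - 1) (k + 1) = {k, k + 1} by ext; simp; omega, sum_pair (by omega)]
      simp
  intro p r c hr hc hrN
  simp only [hsum]
  refine det_nonneg_of_sorted_combination (fun i l => U (r i) l) (fun d hd => hU p r d hr hd hrN)
    (fun j => Icc (c j - 1) (c j)) (fun j j' hjj' l hl l' hl' => ?_) _ (fun j l => ?_)
  · have := hc hjj'
    simp only [mem_Icc] at hl hl'
    omega
  · split_ifs
    exacts [hw _, zero_le_one]

theorem totallyNonneg_of_forall_totallyNonnegBelow {M : ℕ → ℕ → ℝ}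
    (h : ∀ N, TotallyNonnegBelow M N) : TotallyNonneg M := fun p r c hr hc =>
  h (∑ i, r i + 1) p r c hr hc fun i =>
    Nat.lt_succ_of_le (single_le_sum (fun _ _ => Nat.zero_le _) (mem_univ i))

theorem totallyNonnegBelow_connectionCoeff (N : ℕ) :
    ∀ {a e : ℕ → ℝ}, Monotone a → IsRGS a e → TotallyNonnegBelow (connectionCoeff a e) N := by
  induction N with
  | zero => exact fun _ _ => totallyNonnegBelow_zero _
  | succ N ih =>
    intro a e ha he
    refine .succ_of_row_zero (fun k hk => connectionCoeff_eq_zero_of_lt hk) zero_le_one ?_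
    rcases (show e 0 ≤ a 0 from he 0).lt_or_eq with hlt | heq
    · exact (ih ha (he.tail_of_ne hlt.ne)).of_bidiagonal (w := fun k => a k - e 0)
        (fun k => sub_nonneg.mpr ((he 0).trans (ha (Nat.zero_le k))))
        (fun _ => rfl) (fun _ _ => rfl)
    · exact (ih (fun i j hij => ha (Nat.succ_le_succ hij)) (he.tail_of_eq heq)).of_bidiagonal
        (w := 0) (fun _ => le_rfl) (fun m => by simp [connectionCoeff, heq])
        (fun m k => by simp [connectionCoeff_succ_succ_of_eq heq])

theorem stmt0 (a e : ℕ → ℝ) (ha : Monotone a) (he : IsRGS a e)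
    (S : ℕ → ℕ → ℝ) (hS : SaeRel a e S) :
    TotallyNonneg S := by
  rw [hS.unique (saeRel_connectionCoeff a e)]
  exact totallyNonneg_of_forall_totallyNonnegBelow fun N =>
    totallyNonnegBelow_connectionCoeff N ha he
end

section
/- Let a = (a_1, a_2, ...) be a non-decreasing sequence of real numbers and let e = (e_1, e_2, ...) be a real sequence that is NOT a restricted growth sequence relative to a. Then the matrix S^{a,e} has a negative entry: there exist m ≥ 0 and 0 ≤ k ≤ m with S^{a,e}(m,k) < 0. In particular, S^{a,e} is not totally non-negative. -/
/-!
Multiplying `∑ₖ S(m,k) ∏_{i<k} (X - aᵢ)` by `X - eₘ` shows that row `m + 1` of `S` arises from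
row `m` by `r ↦ nextRow a eₘ r`. If all entries of `S` are non-negative, induction on `m` shows
that the first non-zero entry of row `m` sits in column `f(m)` and is positive. Then
`eₘ ≤ a_{f(m)}`, for otherwise the entry `(m + 1, f(m))` would be
`(a_{f(m)} - eₘ) S(m, f(m)) < 0`; and the new first non-zero entry moves to `f(m) + 1` exactly
when `eₘ = a_{f(m)}`. Hence `e` is a restricted growth sequence relative to `a`.
-/

open Polynomial Finset

section NewtonBasis

variable {R : Type*} [CommRing R]

noncomputable def newtonPoly (a : ℕ → R) (k : ℕ) : R[X] := ∏ i ∈ range k, (X - C (a i))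

theorem newtonPoly_succ (a : ℕ → R) (k : ℕ) :
    newtonPoly a (k + 1) = newtonPoly a k * (X - C (a k)) :=
  prod_range_succ _ _

theorem monic_newtonPoly (a : ℕ → R) (k : ℕ) : (newtonPoly a k).Monic :=
  monic_prod_of_monic _ _ fun i _ => monic_X_sub_C (a i)

theorem natDegree_newtonPoly [Nontrivial R] (a : ℕ → R) (k : ℕ) :
    (newtonPoly a k).natDegree = k := by
  rw [newtonPoly, natDegree_prod_of_monic _ _ fun i _ => monic_X_sub_C (a i)]
  simp

theorem coeff_sum_C_mul_newtonPoly [Nontrivial R] (a c : ℕ → R) (n : ℕ) :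
    (∑ k ∈ range (n + 1), C (c k) * newtonPoly a k).coeff n = c n := by
  have hlow : ∀ k ∈ range n, (C (c k) * newtonPoly a k).coeff n = 0 := fun k hk => by
    rw [coeff_C_mul, coeff_eq_zero_of_natDegree_lt, mul_zero]
    rwa [natDegree_newtonPoly, ← mem_range]
  have htop : (newtonPoly a n).coeff n = 1 := by
    simpa only [natDegree_newtonPoly] using (monic_newtonPoly a n).coeff_natDegree
  rw [sum_range_succ, coeff_add, finsetSum_coeff, sum_eq_zero hlow, coeff_C_mul, htop,
    mul_one, zero_add]

theorem eq_of_sum_C_mul_newtonPoly_eq [Nontrivial R] (a c d : ℕ → R) {n : ℕ}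
    (h : ∑ k ∈ range n, C (c k) * newtonPoly a k = ∑ k ∈ range n, C (d k) * newtonPoly a k) :
    ∀ k < n, c k = d k := by
  induction n with
  | zero => intro k hk; omega
  | succ n ih =>
    have hn : c n = d n := by
      simpa only [coeff_sum_C_mul_newtonPoly] using congrArg (coeff · n) h
    rw [sum_range_succ, sum_range_succ, hn, add_left_inj] at h
    intro k hk
    rcases Nat.lt_succ_iff_lt_or_eq.1 hk with hk | rfl
    exacts [ih h k hk, hn]

/-- Coefficients of `(∑ₖ rₖ Nₖ) * (X - x)` in the Newton basis `Nₖ = newtonPoly a k`, read off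
from `(X - x) Nₖ = Nₖ₊₁ + (aₖ - x) Nₖ`. -/
def nextRow (a : ℕ → R) (x : R) (r : ℕ → R) : ℕ → R
  | 0 => (a 0 - x) * r 0
  | k + 1 => r k + (a (k + 1) - x) * r (k + 1)

theorem sum_C_mul_newtonPoly_mul_X_sub_C (a r : ℕ → R) (x : R) (n : ℕ) :
    (∑ k ∈ range n, C (r k) * newtonPoly a k) * (X - C x) =
      ∑ k ∈ range (n + 1), C (nextRow a x r k) * newtonPoly a k
        - C ((a n - x) * r n) * newtonPoly a n := by
  induction n with
  | zero => simp [nextRow]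
  | succ n ih =>
    rw [sum_range_succ, add_mul, ih, sum_range_succ _ (n + 1), newtonPoly_succ]
    simp only [nextRow, C_add, C_mul, C_sub]
    ring

variable {a : ℕ → R} {x : R} {r : ℕ → R} {f : ℕ}

theorem nextRow_eq_zero_of_lt (hr : ∀ k < f, r k = 0) {k : ℕ} (hk : k < f) :
    nextRow a x r k = 0 := by
  cases k with
  | zero => simp [nextRow, hr 0 hk]
  | succ k => simp [nextRow, hr k (by omega), hr (k + 1) hk]

theorem nextRow_eq_of_forall_lt_eq_zero (hr : ∀ k < f, r k = 0) :
    nextRow a x r f = (a f - x) * r f := by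
  cases f with
  | zero => rfl
  | succ f => simp [nextRow, hr f (by omega)]

end NewtonBasis

section FirstPos

variable {R : Type*} [CommRing R] [LinearOrder R] [IsStrictOrderedRing R]
  {a : ℕ → R} {x : R} {r : ℕ → R} {f : ℕ}

def FirstPosAt (r : ℕ → R) (f : ℕ) : Prop := (∀ k < f, r k = 0) ∧ 0 < r f

theorem FirstPosAt.nextRow_neg (hr : FirstPosAt r f) (hx : a f < x) : nextRow a x r f < 0 := by
  rw [nextRow_eq_of_forall_lt_eq_zero hr.1]
  exact mul_neg_of_neg_of_pos (sub_neg.2 hx) hr.2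

theorem FirstPosAt.nextRow (ha : Monotone a) (hr₀ : ∀ k, 0 ≤ r k) (hr : FirstPosAt r f)
    (hx : x ≤ a f) : FirstPosAt (nextRow a x r) (if x = a f then f + 1 else f) := by
  obtain ⟨hzero, hpos⟩ := hr
  split_ifs with hxf
  · refine ⟨fun k hk => ?_, ?_⟩
    · rcases Nat.lt_succ_iff_lt_or_eq.1 hk with hk | rfl
      · exact nextRow_eq_zero_of_lt hzero hk
      · rw [nextRow_eq_of_forall_lt_eq_zero hzero, hxf, sub_self, zero_mul]
    · have hstep : 0 ≤ (a (f + 1) - x) * r (f + 1) :=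
        mul_nonneg (sub_nonneg.2 (hxf ▸ ha f.le_succ)) (hr₀ (f + 1))
      change 0 < r f + (a (f + 1) - x) * r (f + 1)
      linarith
  · refine ⟨fun k hk => nextRow_eq_zero_of_lt hzero hk, ?_⟩
    rw [nextRow_eq_of_forall_lt_eq_zero hzero]
    exact mul_pos (sub_pos.2 (lt_of_le_of_ne hx hxf)) hpos

end FirstPos

namespace SaeRel

variable {a e : ℕ → ℝ} {S : ℕ → ℕ → ℝ}

theorem row_succ (hS : SaeRel a e S) (m : ℕ) : S (m + 1) = nextRow a (e m) (S m) := by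
  funext k
  rcases lt_or_ge (m + 1) k with hk | hk
  · obtain ⟨k, rfl⟩ : ∃ j, k = j + 1 := ⟨k - 1, by omega⟩
    rw [hS.1 _ _ hk]
    simp [nextRow, hS.1 m k (by omega), hS.1 m (k + 1) (by omega)]
  · refine eq_of_sum_C_mul_newtonPoly_eq (n := m + 2) a _ _ ?_ k (by omega)
    calc ∑ k ∈ range (m + 2), C (S (m + 1) k) * newtonPoly a k
        = ∏ i ∈ range (m + 1), (X - C (e i)) := (hS.2 (m + 1)).symm
      _ = (∑ k ∈ range (m + 1), C (S m k) * newtonPoly a k) * (X - C (e m)) := by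
        rw [prod_range_succ, hS.2 m]; rfl
      _ = ∑ k ∈ range (m + 2), C (nextRow a (e m) (S m) k) * newtonPoly a k := by
        rw [sum_C_mul_newtonPoly_mul_X_sub_C, hS.1 m (m + 1) (by omega), mul_zero, C_0,
          zero_mul, sub_zero]

theorem row_zero (hS : SaeRel a e S) : S 0 0 = 1 := by
  simpa [eq_comm] using congrArg (coeff · 0) (hS.2 0)

theorem isRGS_of_nonneg (hS : SaeRel a e S) (ha : Monotone a) (hnn : ∀ m k, 0 ≤ S m k) :
    IsRGS a e := by
  have hcap : ∀ m, FirstPosAt (S m) (rgsF a e m) → e m ≤ a (rgsF a e m) := fun m h =>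
    not_lt.1 fun hlt => (hnn (m + 1) _).not_gt (hS.row_succ m ▸ h.nextRow_neg hlt)
  have hfirst : ∀ m, FirstPosAt (S m) (rgsF a e m) := by
    intro m
    induction m with
    | zero => exact ⟨fun k hk => absurd hk k.not_lt_zero, hS.row_zero ▸ one_pos⟩
    | succ m ih => exact hS.row_succ m ▸ ih.nextRow ha (hnn m) (hcap m ih)
  exact fun m => hcap m (hfirst m)

end SaeRel

theorem TotallyNonneg.nonneg {M : ℕ → ℕ → ℝ} (hM : TotallyNonneg M) (m k : ℕ) : 0 ≤ M m k := by
  simpa using hM 1 (fun _ => m) (fun _ => k) (Subsingleton.strictMono _) (Subsingleton.strictMono _)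

theorem stmt1 (a e : ℕ → ℝ) (ha : Monotone a) (he : ¬ IsRGS a e)
    (S : ℕ → ℕ → ℝ) (hS : SaeRel a e S) :
    (∃ m k : ℕ, k ≤ m ∧ S m k < 0) ∧ ¬ TotallyNonneg S := by
  have hneg : ∃ m k : ℕ, k ≤ m ∧ S m k < 0 := by
    by_contra! h
    refine he (hS.isRGS_of_nonneg ha fun m k => ?_)
    rcases le_or_gt k m with hkm | hmk
    exacts [h m k hkm, (hS.1 m k hmk).ge]
  refine ⟨hneg, fun hT => ?_⟩
  obtain ⟨m, k, -, hmk⟩ := hneg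
  exact hmk.not_ge (hT.nonneg m k)
end

section
/- Let a = (a_1, a_2, ...) be a non-decreasing sequence of real numbers and let e = (e_1, e_2, ...) be a real sequence. Define f by f(1) = 1 and, for i ≥ 1, f(i+1) = f(i) if e_i < a_{f(i)} and f(i+1) = f(i) + 1 if e_i = a_{f(i)} (f(i+1) arbitrary otherwise). Suppose j is the smallest index with e_j > a_{f(j)} (so e_i ≤ a_{f(i)} for all i < j), and set ℓ = f(j). Then S^{a,e}(j, ℓ - 1) < 0. -/
/-!
Multiplying `∏_{i<m} (x - e_i)` by `x - e_m` and re-expanding in the Newton basis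
`∏_{i<k} (x - a_i)` gives the row recurrence
`S(m+1, k) = S(m, k-1) + (a_k - e_m) S(m, k)`.
As long as `e_m ≤ a_{f(m)}`, the row `S(m, ·)` is non-negative with first non-zero entry at
`f(m)`: below `f(m)` the row vanishes, and from `f(m)` on the factor `a_k - e_m` is
non-negative by monotonicity of `a`. At the first violation `e_j > a_{f(j)}`, the entry
`S(j+1, f(j))` reduces to `(a_{f(j)} - e_j) S(j, f(j))`, a negative times a positive number.
-/

open Polynomial Finset

section NewtonBasis

variable {R : Type*} [CommRing R]

noncomputable def newtonProd (a : ℕ → R) (k : ℕ) : R[X] := ∏ i ∈ range k, (X - C (a i))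

lemma newtonProd_mul_X_sub_C (a : ℕ → R) (k : ℕ) (x : R) :
    newtonProd a k * (X - C x) = newtonProd a (k + 1) + C (a k - x) * newtonProd a k := by
  rw [newtonProd, newtonProd, prod_range_succ, map_sub]
  ring

lemma degree_newtonProd [Nontrivial R] (a : ℕ → R) (k : ℕ) : (newtonProd a k).degree = k := by
  simp [newtonProd, degree_prod_of_monic, monic_X_sub_C]

noncomputable def newtonSequence [Nontrivial R] (a : ℕ → R) : Polynomial.Sequence R :=
  ⟨newtonProd a, degree_newtonProd a⟩

lemma linearIndependent_newtonProd [IsDomain R] (a : ℕ → R) :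
    LinearIndependent R (newtonProd a) :=
  (newtonSequence a).linearIndependent

lemma eq_of_sum_C_mul_newtonProd_eq [IsDomain R] (a : ℕ → R) {c d : ℕ → R} {n : ℕ}
    (h : ∑ k ∈ range n, C (c k) * newtonProd a k = ∑ k ∈ range n, C (d k) * newtonProd a k)
    {k : ℕ} (hk : k < n) : c k = d k := by
  refine sub_eq_zero.1 <|
    linearIndependent_iff'.1 (linearIndependent_newtonProd a) (range n) (c - d) ?_ k
      (mem_range.2 hk)
  simp only [Pi.sub_apply, sub_smul, sum_sub_distrib, ← C_mul', h, sub_self]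

/-- The coefficients of `(∑_k s_k ∏_{i<k} (X - a_i)) * (X - x)` in the Newton basis. -/
def rowStep (a : ℕ → R) (x : R) (s : ℕ → R) : ℕ → R
  | 0 => (a 0 - x) * s 0
  | k + 1 => s k + (a (k + 1) - x) * s (k + 1)

lemma sum_C_mul_newtonProd_mul_X_sub_C (a : ℕ → R) (x : R) (s : ℕ → R) {n : ℕ}
    (hs : s (n + 1) = 0) :
    (∑ k ∈ range (n + 1), C (s k) * newtonProd a k) * (X - C x) =
      ∑ k ∈ range (n + 2), C (rowStep a x s k) * newtonProd a k := by
  set g : ℕ → R[X] := fun k => C ((a k - x) * s k) * newtonProd a k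
  have hg : g (n + 1) = 0 := by simp [g, hs]
  calc (∑ k ∈ range (n + 1), C (s k) * newtonProd a k) * (X - C x)
      = ∑ k ∈ range (n + 1), (C (s k) * newtonProd a (k + 1) + g k) := by
        rw [sum_mul]
        refine sum_congr rfl fun k _ => ?_
        rw [mul_assoc, newtonProd_mul_X_sub_C, mul_add, ← mul_assoc, ← map_mul, mul_comm (s k)]
    _ = ∑ k ∈ range (n + 1), (C (s k) * newtonProd a (k + 1) + g (k + 1)) + g 0 := by
        rw [sum_add_distrib, sum_add_distrib, sum_range_succ' g,
          sum_range_succ (fun k => g (k + 1)) n, hg, add_zero, add_assoc]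
    _ = ∑ k ∈ range (n + 2), C (rowStep a x s k) * newtonProd a k := by
        rw [sum_range_succ' _ (n + 1)]
        simp only [rowStep, g, map_add, add_mul]

lemma rowStep_of_le {a : ℕ → R} {x : R} {s : ℕ → R} {f : ℕ} (hz : ∀ k < f, s k = 0)
    {k : ℕ} (hk : k ≤ f) : rowStep a x s k = (a k - x) * s k := by
  cases k with
  | zero => rfl
  | succ k => rw [rowStep, hz k (by omega), zero_add]

end NewtonBasis

section RowInvariant

variable {R : Type*} [CommRing R] [LinearOrder R] [IsStrictOrderedRing R]

structure NonnegWithFirstPos (s : ℕ → R) (f : ℕ) : Prop where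
  eq_zero_of_lt : ∀ k < f, s k = 0
  pos : 0 < s f
  nonneg : ∀ k, 0 ≤ s k

namespace NonnegWithFirstPos

variable {a : ℕ → R} {x : R} {s : ℕ → R} {f : ℕ}

lemma sub_mul_nonneg (ha : Monotone a) (hs : NonnegWithFirstPos s f) (hx : x ≤ a f) (k : ℕ) :
    0 ≤ (a k - x) * s k := by
  rcases lt_or_ge k f with hk | hk
  · rw [hs.eq_zero_of_lt k hk, mul_zero]
  · exact mul_nonneg (sub_nonneg.2 (hx.trans (ha hk))) (hs.nonneg k)

lemma rowStep (ha : Monotone a) (hs : NonnegWithFirstPos s f) (hx : x ≤ a f) :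
    NonnegWithFirstPos (rowStep a x s) (if x = a f then f + 1 else f) where
  eq_zero_of_lt k hk := by
    obtain hkf | ⟨rfl, hxk⟩ : k < f ∨ k = f ∧ x = a f := by
      split_ifs at hk with hxf
      · exact (Nat.lt_succ_iff_lt_or_eq.1 hk).imp_right (⟨·, hxf⟩)
      · exact .inl hk
    · rw [rowStep_of_le hs.eq_zero_of_lt hkf.le, hs.eq_zero_of_lt k hkf, mul_zero]
    · rw [rowStep_of_le hs.eq_zero_of_lt le_rfl, hxk, sub_self, zero_mul]
  pos := by
    split_ifs with hxf
    · exact add_pos_of_pos_of_nonneg hs.pos (hs.sub_mul_nonneg ha hx (f + 1))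
    · rw [rowStep_of_le hs.eq_zero_of_lt le_rfl]
      exact mul_pos (sub_pos.2 (lt_of_le_of_ne hx hxf)) hs.pos
  nonneg k := by
    cases k with
    | zero => exact hs.sub_mul_nonneg ha hx 0
    | succ k => exact add_nonneg (hs.nonneg k) (hs.sub_mul_nonneg ha hx (k + 1))

end NonnegWithFirstPos

end RowInvariant

namespace SaeRel

variable {a e : ℕ → ℝ} {S : ℕ → ℕ → ℝ}

lemma zero_row (hS : SaeRel a e S) : NonnegWithFirstPos (S 0) 0 := by
  have h00 : S 0 0 = 1 := C_inj.1 (by simpa using (hS.2 0).symm)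
  refine ⟨fun k hk => absurd hk (Nat.not_lt_zero k), by rw [h00]; exact one_pos, fun k => ?_⟩
  rcases Nat.eq_zero_or_pos k with rfl | hk
  · rw [h00]; exact zero_le_one
  · rw [hS.1 0 k hk]

lemma succ_row (hS : SaeRel a e S) (m : ℕ) : S (m + 1) = rowStep a (e m) (S m) := by
  have hexp : ∑ k ∈ range (m + 2), C (S (m + 1) k) * newtonProd a k =
      ∑ k ∈ range (m + 2), C (rowStep a (e m) (S m) k) * newtonProd a k := by
    rw [← sum_C_mul_newtonProd_mul_X_sub_C a (e m) (S m) (hS.1 m (m + 1) m.lt_succ_self)]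
    exact (hS.2 (m + 1)).symm.trans (by rw [prod_range_succ, hS.2 m]; rfl)
  funext k
  rcases lt_or_ge k (m + 2) with hk | hk
  · exact eq_of_sum_C_mul_newtonProd_eq a hexp hk
  · obtain ⟨k, rfl⟩ : ∃ k', k = k' + 1 := ⟨k - 1, by omega⟩
    rw [rowStep, hS.1 _ _ (by omega), hS.1 _ _ (by omega), hS.1 _ _ (by omega),
      mul_zero, add_zero]

lemma nonnegWithFirstPos_rgsF (hS : SaeRel a e S) (ha : Monotone a) {j : ℕ}
    (hmin : ∀ i < j, e i ≤ a (rgsF a e i)) :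
    ∀ m ≤ j, NonnegWithFirstPos (S m) (rgsF a e m)
  | 0, _ => hS.zero_row
  | m + 1, hm => by
    rw [hS.succ_row]
    exact (nonnegWithFirstPos_rgsF hS ha hmin m (by omega)).rowStep ha (hmin m (by omega))

end SaeRel

/-- Indices are 0-based: `e j` is `e_{j+1}`, `rgsF a e j` is `ℓ - 1`, and row `j + 1` of `S`
is the paper's row `j`. -/
theorem stmt2 (a e : ℕ → ℝ) (ha : Monotone a)
    (S : ℕ → ℕ → ℝ) (hS : SaeRel a e S)
    (j : ℕ) (hj : a (rgsF a e j) < e j) (hmin : ∀ i < j, e i ≤ a (rgsF a e i)) :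
    S (j + 1) (rgsF a e j) < 0 := by
  have hrow := hS.nonnegWithFirstPos_rgsF ha hmin j le_rfl
  rw [hS.succ_row, rowStep_of_le hrow.eq_zero_of_lt le_rfl]
  exact mul_neg_of_neg_of_pos (sub_neg.2 hj) hrow.pos
end

section
/- Let (b_1, b_2, ...) be a non-decreasing sequence of positive integers, and for each m let B_m be the Ferrers board with m columns in which column i has b_i cells, i.e., the set of cells {(i,j) : 1 ≤ j ≤ m, 1 ≤ i ≤ b_j}. Let R_k(B_m) denote the number of placements of k non-attacking rooks on B_m, i.e., the number of k-element subsets of the cells of B_m in which no two cells share a row coordinate and no two cells share a column coordinate. Then the infinite matrix whose (m,k) entry (m, k ≥ 0) is R_{m-k}(B_m) when k ≤ m and 0 when k > m is totally non-negative. -/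
/-- The number of placements of `k` non-attacking rooks on the Ferrers board `B_m`
with `m` columns, whose `j`-th column (`1 ≤ j ≤ m`) consists of the cells
`(i, j)` with `1 ≤ i ≤ b j`. -/
noncomputable def rookNum (b : ℕ → ℕ) (m k : ℕ) : ℕ :=
  Nat.card {P : Finset (ℕ × ℕ) // P.card = k ∧
    (∀ c ∈ P, 1 ≤ c.2 ∧ c.2 ≤ m ∧ 1 ≤ c.1 ∧ c.1 ≤ b c.2) ∧
    ∀ c ∈ P, ∀ c' ∈ P, c ≠ c' → c.1 ≠ c'.1 ∧ c.2 ≠ c'.2}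

open Finset

theorem Matrix.det_add_eq_sum_det_piecewise {n R : Type*} [Fintype n] [DecidableEq n]
    [CommRing R] (X Y : Matrix n n R) :
    (X + Y).det = ∑ s : Finset n, (Matrix.of fun i j => if j ∈ s then X i j else Y i j).det := by
  rw [← Matrix.det_transpose, Matrix.transpose_add]
  refine (Matrix.detRowAlternating.map_add_univ X.transpose Y.transpose).trans
    (sum_congr rfl fun s _ => ?_)
  rw [← Matrix.det_transpose]
  congr 1
  ext i j
  by_cases h : i ∈ s <;> simp [Finset.piecewise, h]

def TotallyNonnegUpTo (n : ℕ) (M : ℕ → ℕ → ℝ) : Prop :=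
  ∀ (p : ℕ) (r c : Fin p → ℕ), StrictMono r → StrictMono c → (∀ i, r i < n) →
    0 ≤ (Matrix.of fun i j => M (r i) (c j)).det

namespace TotallyNonnegUpTo

variable {n : ℕ} {M N : ℕ → ℕ → ℝ}

theorem zero (M : ℕ → ℕ → ℝ) : TotallyNonnegUpTo 0 M := by
  rintro (_ | p) r c - - hr
  · simp
  · exact absurd (hr 0) (Nat.not_lt_zero _)

theorem det_nonneg_of_monotone (hN : TotallyNonnegUpTo n N) {p : ℕ} {r d : Fin p → ℕ}
    (hr : StrictMono r) (hd : Monotone d) (hrn : ∀ i, r i < n) :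
    0 ≤ (Matrix.of fun i j => N (r i) (d j)).det := by
  by_cases hinj : Function.Injective d
  · exact hN p r d hr (hd.strictMono_of_injective hinj) hrn
  · obtain ⟨j₁, j₂, hd₁₂, hne⟩ := Function.not_injective_iff.1 hinj
    exact (Matrix.det_zero_of_column_eq hne fun i => by simp [hd₁₂]).ge

theorem mul_bidiagonal (hN : TotallyNonnegUpTo n N) {u w : ℕ → ℝ} (hu : ∀ k, 0 ≤ u k)
    (hw : ∀ k, 0 ≤ w k) :
    TotallyNonnegUpTo n fun m k => u k * N m (k - 1) + w k * N m k := by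
  classical
  intro p r c hr hc hrn
  rw [show (Matrix.of fun i j => u (c j) * N (r i) (c j - 1) + w (c j) * N (r i) (c j)) =
      Matrix.of (fun i j => u (c j) * N (r i) (c j - 1)) +
        Matrix.of (fun i j => w (c j) * N (r i) (c j)) from rfl,
    Matrix.det_add_eq_sum_det_piecewise]
  refine sum_nonneg fun s _ => ?_
  simp only [Matrix.of_apply]
  -- each summand picks column `c j - 1` or `c j` of `N`, and these choices stay monotone in `j`
  set a : Fin p → ℝ := fun j => if j ∈ s then u (c j) else w (c j)
  set d : Fin p → ℕ := fun j => if j ∈ s then c j - 1 else c j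
  have hd : Monotone d := by
    intro j j' hjj'
    rcases hjj'.lt_or_eq with hlt | rfl
    · have := hc hlt
      simp only [d]
      split_ifs <;> omega
    · exact le_rfl
  have hsummand : (Matrix.of fun i j => if j ∈ s then u (c j) * N (r i) (c j - 1)
      else w (c j) * N (r i) (c j)) =
      Matrix.of fun i j => a j * Matrix.of (fun i j => N (r i) (d j)) i j := by
    ext i j
    by_cases hj : j ∈ s <;> simp [a, d, hj]
  rw [hsummand, Matrix.det_mul_row]
  refine mul_nonneg (prod_nonneg fun j _ => ?_) (hN.det_nonneg_of_monotone hr hd hrn)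
  simp only [a]
  split_ifs
  exacts [hu _, hw _]

theorem succ_of_row_zero (h₀ : ∀ k, M 0 k = if k = 0 then 1 else 0)
    (h : TotallyNonnegUpTo n fun m k => M (m + 1) k) : TotallyNonnegUpTo (n + 1) M := by
  have h_pos : ∀ (p : ℕ) (r c : Fin p → ℕ), StrictMono r → StrictMono c → (∀ i, r i < n + 1) →
      (∀ i, 0 < r i) → 0 ≤ (Matrix.of fun i j => M (r i) (c j)).det := by
    intro p r c hr hc hrn hr₀
    have hr' : StrictMono fun i => r i - 1 := fun i j hij => by
      have := hr hij
      have := hr₀ i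
      show r i - 1 < r j - 1
      omega
    have hM : (Matrix.of fun i j => M (r i) (c j)) =
        Matrix.of fun i j => M (r i - 1 + 1) (c j) := by
      ext i j
      simp only [Matrix.of_apply, Nat.sub_add_cancel (hr₀ i)]
    rw [hM]
    refine h p (fun i => r i - 1) c hr' hc fun i => ?_
    have := hrn i
    have := hr₀ i
    show r i - 1 < n
    omega
  intro p r c hr hc hrn
  rcases p with _ | p
  · simp
  by_cases hr₀ : r 0 = 0
  · by_cases hc₀ : c 0 = 0
    · -- the first row of the minor is `(1, 0, …, 0)`
      rw [Matrix.det_succ_row_zero, Fin.sum_univ_succ]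
      simp only [Matrix.of_apply, hr₀, hc₀, h₀, Fin.val_zero, Fin.succAbove_zero, pow_zero,
        one_mul, if_true, mul_one, Fin.val_succ]
      rw [sum_eq_zero fun j _ => by have := hc (Fin.succ_pos j); simp; omega, add_zero]
      exact h_pos p _ _ (hr.comp Fin.strictMono_succ) (hc.comp Fin.strictMono_succ)
        (fun i => hrn _) fun i => hr₀ ▸ hr (Fin.succ_pos i)
    · refine (Matrix.det_eq_zero_of_row_eq_zero 0 fun j => ?_).ge
      have := hc.monotone (Fin.zero_le j)
      simp only [Matrix.of_apply, hr₀, h₀]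
      rw [if_neg (by omega)]
  · exact h_pos _ r c hr hc hrn fun i =>
      (Nat.pos_of_ne_zero hr₀).trans_le (hr.monotone (Fin.zero_le i))

end TotallyNonnegUpTo

theorem TotallyNonneg.of_forall_totallyNonnegUpTo {M : ℕ → ℕ → ℝ}
    (h : ∀ n, TotallyNonnegUpTo n M) : TotallyNonneg M := fun p r c hr hc =>
  h (∑ i, r i + 1) p r c hr hc fun i =>
    Nat.lt_succ_of_le (single_le_sum (fun _ _ => Nat.zero_le _) (mem_univ i))

def ferrersBoard (b : ℕ → ℕ) (m : ℕ) : Finset (ℕ × ℕ) :=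
  (Icc 1 m).biUnion fun j => Icc 1 (b j) ×ˢ {j}

def IsNonattacking (P : Finset (ℕ × ℕ)) : Prop :=
  Set.InjOn Prod.fst (P : Set (ℕ × ℕ)) ∧ Set.InjOn Prod.snd (P : Set (ℕ × ℕ))

open scoped Classical in
noncomputable def rookPlacements (b : ℕ → ℕ) (m k : ℕ) : Finset (Finset (ℕ × ℕ)) :=
  ((ferrersBoard b m).powersetCard k).filter IsNonattacking

section RookPlacements

variable {b : ℕ → ℕ} {m k : ℕ} {P : Finset (ℕ × ℕ)}

theorem mem_ferrersBoard {c : ℕ × ℕ} :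
    c ∈ ferrersBoard b m ↔ 1 ≤ c.2 ∧ c.2 ≤ m ∧ 1 ≤ c.1 ∧ c.1 ≤ b c.2 := by
  obtain ⟨i, j⟩ := c
  simp only [ferrersBoard, mem_biUnion, mem_Icc, mem_product, mem_singleton]
  constructor
  · rintro ⟨j, hj, hi, rfl⟩
    exact ⟨hj.1, hj.2, hi⟩
  · rintro ⟨hj₁, hj₂, hi⟩
    exact ⟨j, ⟨hj₁, hj₂⟩, hi, rfl⟩

theorem ferrersBoard_mono {n : ℕ} (hmn : m ≤ n) : ferrersBoard b m ⊆ ferrersBoard b n :=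
  fun c hc => by
    rw [mem_ferrersBoard] at hc ⊢
    exact ⟨hc.1, hc.2.1.trans hmn, hc.2.2⟩

theorem image_fst_ferrersBoard_subset (hb : MonotoneOn b (Set.Ici 1)) {n : ℕ} (hmn : m ≤ n) :
    (ferrersBoard b m).image Prod.fst ⊆ Icc 1 (b n) := by
  intro i hi
  obtain ⟨c, hc, rfl⟩ := mem_image.1 hi
  rw [mem_ferrersBoard] at hc
  have hcn : c.2 ≤ n := hc.2.1.trans hmn
  exact mem_Icc.2 ⟨hc.2.2.1, hc.2.2.2.trans (hb hc.1 (hc.1.trans hcn) hcn)⟩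

theorem isNonattacking_iff :
    IsNonattacking P ↔ ∀ c ∈ P, ∀ c' ∈ P, c ≠ c' → c.1 ≠ c'.1 ∧ c.2 ≠ c'.2 := by
  constructor
  · rintro ⟨h₁, h₂⟩ c hc c' hc' hne
    exact ⟨fun h => hne (h₁ hc hc' h), fun h => hne (h₂ hc hc' h)⟩
  · intro h
    exact ⟨fun c hc c' hc' hcc' => by_contra fun hne => (h c hc c' hc' hne).1 hcc',
      fun c hc c' hc' hcc' => by_contra fun hne => (h c hc c' hc' hne).2 hcc'⟩

theorem IsNonattacking.mono {Q : Finset (ℕ × ℕ)} (hP : IsNonattacking P) (hQP : Q ⊆ P) :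
    IsNonattacking Q :=
  ⟨hP.1.mono (coe_subset.2 hQP), hP.2.mono (coe_subset.2 hQP)⟩

theorem mem_rookPlacements :
    P ∈ rookPlacements b m k ↔ P ⊆ ferrersBoard b m ∧ #P = k ∧ IsNonattacking P := by
  classical
  rw [rookPlacements, mem_filter, mem_powersetCard, and_assoc]

theorem rookNum_eq_card_rookPlacements (b : ℕ → ℕ) (m k : ℕ) :
    rookNum b m k = #(rookPlacements b m k) := by
  rw [rookNum, ← Nat.card_eq_finsetCard]
  refine Nat.card_congr (Equiv.subtypeEquivRight fun P => ?_)
  simp only [mem_rookPlacements, subset_iff, mem_ferrersBoard, isNonattacking_iff]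
  tauto

theorem rookNum_zero_right (b : ℕ → ℕ) (m : ℕ) : rookNum b m 0 = 1 := by
  rw [rookNum_eq_card_rookPlacements, card_eq_one]
  refine ⟨∅, ext fun P => ?_⟩
  rw [mem_rookPlacements, mem_singleton, card_eq_zero]
  exact ⟨fun h => h.2.1, by rintro rfl; exact ⟨empty_subset _, rfl, by simp [IsNonattacking]⟩⟩

theorem rookNum_zero_succ (b : ℕ → ℕ) (k : ℕ) : rookNum b 0 (k + 1) = 0 := by
  simp [rookNum_eq_card_rookPlacements, rookPlacements, ferrersBoard]

theorem filter_rookPlacements_succ (b : ℕ → ℕ) (m k : ℕ) :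
    (rookPlacements b (m + 1) k).filter (fun P => ∀ c ∈ P, c.2 ≤ m) = rookPlacements b m k := by
  ext P
  simp only [mem_filter, mem_rookPlacements, subset_iff, mem_ferrersBoard]
  constructor
  · rintro ⟨⟨hP, hk, hna⟩, hm⟩
    exact ⟨fun c hc => ⟨(hP hc).1, hm c hc, (hP hc).2.2⟩, hk, hna⟩
  · rintro ⟨hP, hk, hna⟩
    exact ⟨⟨fun c hc => ⟨(hP hc).1, (hP hc).2.1.trans m.le_succ, (hP hc).2.2⟩, hk, hna⟩,
      fun c hc => (hP hc).2.1⟩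

theorem snd_le_of_mem_rookPlacements (hP : P ∈ rookPlacements b m k) {c : ℕ × ℕ} (hc : c ∈ P) :
    c.2 ≤ m :=
  (mem_ferrersBoard.1 ((mem_rookPlacements.1 hP).1 hc)).2.1

theorem insert_mem_rookPlacements_succ {Q : Finset (ℕ × ℕ)} {i : ℕ}
    (hQ : Q ∈ rookPlacements b m k) (hi : i ∈ Icc 1 (b (m + 1)) \ Q.image Prod.fst) :
    insert (i, m + 1) Q ∈ rookPlacements b (m + 1) (k + 1) := by
  obtain ⟨hi, hiQ⟩ := mem_sdiff.1 hi
  obtain ⟨hQb, hQk, hQna⟩ := mem_rookPlacements.1 hQ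
  have hnot : (i, m + 1) ∉ Q := fun h => by have := snd_le_of_mem_rookPlacements hQ h; omega
  refine mem_rookPlacements.2 ⟨?_, by rw [card_insert_of_notMem hnot, hQk], ?_⟩
  · refine insert_subset (mem_ferrersBoard.2 ?_) (hQb.trans (ferrersBoard_mono m.le_succ))
    exact ⟨m.succ_pos, le_rfl, mem_Icc.1 hi⟩
  · rw [IsNonattacking, coe_insert, Set.injOn_insert hnot, Set.injOn_insert hnot]
    refine ⟨⟨hQna.1, fun h => hiQ (by simpa using h)⟩, ⟨hQna.2, fun ⟨c, hc, hcm⟩ => ?_⟩⟩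
    have := snd_le_of_mem_rookPlacements hQ hc
    simp only at hcm
    omega

theorem erase_mem_rookPlacements {a : ℕ × ℕ} (hP : P ∈ rookPlacements b (m + 1) (k + 1))
    (ha : a ∈ P) (ha₂ : a.2 = m + 1) : P.erase a ∈ rookPlacements b m k := by
  obtain ⟨hPb, hPk, hPna⟩ := mem_rookPlacements.1 hP
  refine mem_rookPlacements.2 ⟨fun c hc => ?_, ?_, hPna.mono (erase_subset a P)⟩
  · have hc' := mem_ferrersBoard.1 (hPb (mem_of_mem_erase hc))
    have : c.2 ≠ a.2 := fun h => ne_of_mem_erase hc (hPna.2 (mem_of_mem_erase hc) ha h)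
    exact mem_ferrersBoard.2 ⟨hc'.1, by omega, hc'.2.2⟩
  · rw [card_erase_of_mem ha, hPk, Nat.add_sub_cancel]

/-- Placements with a rook in the last column `m + 1` correspond to a placement of one rook
fewer on the first `m` columns together with a row of the last column that it leaves free. -/
theorem card_filter_rookPlacements_succ_succ (b : ℕ → ℕ) (m k : ℕ) :
    #((rookPlacements b (m + 1) (k + 1)).filter (fun P => ¬∀ c ∈ P, c.2 ≤ m)) =
      #((rookPlacements b m k).sigma fun Q => Icc 1 (b (m + 1)) \ Q.image Prod.fst) := by
  symm
  refine card_bij (fun (x : Σ _ : Finset (ℕ × ℕ), ℕ) _ => insert (x.2, m + 1) x.1) ?_ ?_ ?_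
  · rintro ⟨Q, i⟩ hQi
    obtain ⟨hQ, hi⟩ := mem_sigma.1 hQi
    refine mem_filter.2 ⟨insert_mem_rookPlacements_succ hQ hi, fun h => ?_⟩
    simpa using h _ (mem_insert_self _ _)
  · rintro ⟨Q, i⟩ hQi ⟨Q', i'⟩ hQi' (heq : insert (i, m + 1) Q = insert (i', m + 1) Q')
    have hQ : Q ∈ rookPlacements b m k := (mem_sigma.1 hQi).1
    have hQ' : Q' ∈ rookPlacements b m k := (mem_sigma.1 hQi').1
    have hfilter : ∀ {R} (j : ℕ), R ∈ rookPlacements b m k →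
        (insert (j, m + 1) R).filter (fun c => c.2 ≤ m) = R := fun j hR => by
      rw [filter_insert, if_neg (by simp),
        filter_true_of_mem fun c => snd_le_of_mem_rookPlacements hR]
    obtain rfl : Q = Q' := by rw [← hfilter i hQ, ← hfilter i' hQ', heq]
    have hnot : (i, m + 1) ∉ Q := fun h => by have := snd_le_of_mem_rookPlacements hQ h; omega
    rw [insert_inj hnot, Prod.mk.injEq] at heq
    rw [heq.1]
  · intro P hP
    obtain ⟨hP, hlast⟩ := mem_filter.1 hP
    obtain ⟨a, ha, ham⟩ : ∃ a ∈ P, m < a.2 := by simpa using hlast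
    obtain ⟨hPb, -, hPna⟩ := mem_rookPlacements.1 hP
    have ha' := mem_ferrersBoard.1 (hPb ha)
    have ha₂ : a.2 = m + 1 := by omega
    refine ⟨⟨P.erase a, a.1⟩, mem_sigma.2 ⟨erase_mem_rookPlacements hP ha ha₂, ?_⟩, ?_⟩
    · refine mem_sdiff.2 ⟨mem_Icc.2 ⟨ha'.2.2.1, ha₂ ▸ ha'.2.2.2⟩, fun h => ?_⟩
      obtain ⟨c, hc, hca⟩ := mem_image.1 h
      exact ne_of_mem_erase hc (hPna.1 (mem_of_mem_erase hc) ha hca)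
    · rw [show (a.1, m + 1) = a from Prod.ext rfl ha₂.symm, insert_erase ha]

theorem rookNum_succ_succ (hb : MonotoneOn b (Set.Ici 1)) (m k : ℕ) :
    (rookNum b (m + 1) (k + 1) : ℤ) =
      rookNum b m (k + 1) + ((b (m + 1) : ℤ) - k) * rookNum b m k := by
  have hfree : ∀ Q ∈ rookPlacements b m k,
      (#(Icc 1 (b (m + 1)) \ Q.image Prod.fst) : ℤ) = b (m + 1) - k := fun Q hQ => by
    obtain ⟨hQb, hQk, hQna⟩ := mem_rookPlacements.1 hQ
    have hrows : Q.image Prod.fst ⊆ Icc 1 (b (m + 1)) :=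
      (image_subset_image hQb).trans (image_fst_ferrersBoard_subset hb m.le_succ)
    have hcard : #(Q.image Prod.fst) = k := by rw [card_image_of_injOn hQna.1, hQk]
    rw [card_sdiff_of_subset hrows, Nat.cast_sub (hcard ▸ card_le_card hrows), Nat.card_Icc,
      hcard, Nat.add_sub_cancel]
  simp only [rookNum_eq_card_rookPlacements]
  rw [← filter_rookPlacements_succ b m (k + 1), ← card_filter_add_card_filter_not
    (s := rookPlacements b (m + 1) (k + 1)) (fun P => ∀ c ∈ P, c.2 ≤ m),
    card_filter_rookPlacements_succ_succ, card_sigma, Nat.cast_add, Nat.cast_sum,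
    sum_congr rfl hfree, sum_const, nsmul_eq_mul, mul_comm]

end RookPlacements

-- `rookNum` extended to integer column heights and to `j < 0`: the peeling identities below
-- then hold unconditionally.
def rookNumRec (b : ℕ → ℤ) : ℕ → ℤ → ℤ
  | 0, j => if j = 0 then 1 else 0
  | m + 1, j => rookNumRec b m j + (b (m + 1) + 1 - j) * rookNumRec b m (j - 1)

namespace rookNumRec

variable (b : ℕ → ℤ)

theorem of_neg {m : ℕ} {j : ℤ} (hj : j < 0) : rookNumRec b m j = 0 := by
  induction m generalizing j with
  | zero => simp [rookNumRec, hj.ne]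
  | succ m ih => simp [rookNumRec, ih hj, ih (show j - 1 < 0 by omega)]

theorem of_lt {m : ℕ} {j : ℤ} (hj : (m : ℤ) < j) : rookNumRec b m j = 0 := by
  induction m generalizing j with
  | zero =>
    simp only [Nat.cast_zero] at hj
    simp [rookNumRec, hj.ne']
  | succ m ih =>
    push_cast at hj
    simp [rookNumRec, ih (show (m : ℤ) < j by omega), ih (show (m : ℤ) < j - 1 by omega)]

theorem succ_eq_peel (m : ℕ) (j : ℤ) :
    rookNumRec b (m + 1) j = rookNumRec (fun i => b (i + 1) - 1) m j +
      (b 1 + m + 1 - j) * rookNumRec (fun i => b (i + 1) - 1) m (j - 1) := by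
  induction m generalizing j with
  | zero =>
    simp only [rookNumRec]
    by_cases h : j = 0
    · simp [h]
    · by_cases h' : j = 1 <;> simp [h, h', sub_eq_zero]
  | succ m ih =>
    rw [rookNumRec, ih j, ih (j - 1)]
    simp only [rookNumRec]
    push_cast
    ring

theorem succ_of_eq_zero (h : b 1 = 0) (m : ℕ) (j : ℤ) :
    rookNumRec b (m + 1) j = rookNumRec (fun i => b (i + 1)) m j := by
  induction m generalizing j with
  | zero =>
    simp only [rookNumRec, h]
    by_cases h' : j = 1 <;> simp [h', sub_eq_zero]
  | succ m ih => rw [rookNumRec, ih j, ih (j - 1), rookNumRec]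

end rookNumRec

def rookMatrix (b : ℕ → ℤ) (m k : ℕ) : ℝ := rookNumRec b m ((m : ℤ) - k)

namespace rookMatrix

variable (b : ℕ → ℤ)

theorem zero_left (k : ℕ) : rookMatrix b 0 k = if k = 0 then 1 else 0 := by
  by_cases hk : k = 0 <;> simp [rookMatrix, rookNumRec, hk]

theorem ite_mul_sub_one (m k : ℕ) :
    (if k = 0 then 0 else 1) * rookMatrix b m (k - 1) = rookNumRec b m ((m : ℤ) + 1 - k) := by
  rcases Nat.eq_zero_or_pos k with rfl | hk
  · simp [rookNumRec.of_lt b (show (m : ℤ) < m + 1 by omega)]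
  · simp [rookMatrix, hk.ne', Nat.cast_sub hk, sub_sub_eq_add_sub]

theorem succ_eq_peel (m k : ℕ) :
    rookMatrix b (m + 1) k =
      (if k = 0 then 0 else 1) * rookMatrix (fun i => b (i + 1) - 1) m (k - 1) +
        (b 1 + k) * rookMatrix (fun i => b (i + 1) - 1) m k := by
  rw [ite_mul_sub_one, rookMatrix, rookMatrix, Nat.cast_succ, rookNumRec.succ_eq_peel,
    show (m : ℤ) + 1 - k - 1 = m - k by ring]
  push_cast
  ring

theorem succ_of_eq_zero (h : b 1 = 0) (m k : ℕ) :
    rookMatrix b (m + 1) k =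
      (if k = 0 then 0 else 1) * rookMatrix (fun i => b (i + 1)) m (k - 1) := by
  rw [ite_mul_sub_one, rookMatrix, Nat.cast_succ, rookNumRec.succ_of_eq_zero b h]

end rookMatrix

theorem rookMatrix_totallyNonnegUpTo (n : ℕ) :
    ∀ b : ℕ → ℤ, 0 ≤ b 1 → MonotoneOn b (Set.Ici 1) → TotallyNonnegUpTo n (rookMatrix b) := by
  induction n with
  | zero => exact fun b _ _ => .zero _
  | succ n ih =>
    intro b hb₁ hb
    refine .succ_of_row_zero (rookMatrix.zero_left b) ?_
    have hu : ∀ k, (0 : ℝ) ≤ if k = 0 then 0 else 1 := fun k => by split_ifs <;> norm_num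
    have hshift : Monotone fun i => b (i + 1) := fun i j hij => hb (by simp) (by simp) (by omega)
    have hb₂ : b 1 ≤ b (1 + 1) := hshift (Nat.zero_le 1)
    rcases hb₁.eq_or_lt with hb₁ | hb₁
    · have hN := ih (fun i => b (i + 1)) (hb₁.le.trans hb₂) (hshift.monotoneOn _)
      convert hN.mul_bidiagonal hu (fun _ => le_rfl) using 1
      funext m k
      rw [rookMatrix.succ_of_eq_zero b hb₁.symm, zero_mul, add_zero]
    · have hN := ih (fun i => b (i + 1) - 1) (by omega) fun i _ j _ hij =>
        sub_le_sub_right (hshift hij) 1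
      have hw : ∀ k : ℕ, (0 : ℝ) ≤ b 1 + k := fun k => by
        have : (0 : ℝ) ≤ b 1 := by exact_mod_cast hb₁.le
        positivity
      convert hN.mul_bidiagonal hu hw using 1
      funext m k
      exact rookMatrix.succ_eq_peel b m k

theorem rookNumRec_natCast {b : ℕ → ℕ} (hb : MonotoneOn b (Set.Ici 1)) (m k : ℕ) :
    rookNumRec (fun i => (b i : ℤ)) m k = rookNum b m k := by
  induction m generalizing k with
  | zero =>
    cases k with
    | zero => simp [rookNumRec, rookNum_zero_right]
    | succ k =>
      simp [rookNumRec.of_lt _ (show ((0 : ℕ) : ℤ) < k + 1 by omega), rookNum_zero_succ]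
  | succ m ih =>
    cases k with
    | zero => simpa [rookNumRec, rookNumRec.of_neg, rookNum_zero_right] using ih 0
    | succ k =>
      rw [rookNumRec, rookNum_succ_succ hb, Nat.cast_succ, add_sub_cancel_right,
        ← Nat.cast_succ, ih, ih]
      push_cast
      ring

theorem rookMatrix_natCast {b : ℕ → ℕ} (hb : MonotoneOn b (Set.Ici 1)) (m k : ℕ) :
    rookMatrix (fun i => (b i : ℤ)) m k = if k ≤ m then (rookNum b m (m - k) : ℝ) else 0 := by
  rw [rookMatrix]
  split_ifs with hkm
  · rw [← Nat.cast_sub hkm, rookNumRec_natCast hb, Int.cast_natCast]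
  · rw [rookNumRec.of_neg _ (by omega), Int.cast_zero]

theorem stmt3_general (b : ℕ → ℕ)
    (hmono : ∀ i j, 1 ≤ i → i ≤ j → b i ≤ b j) :
    TotallyNonneg (fun m k => if k ≤ m then (rookNum b m (m - k) : ℝ) else 0) := by
  have hb : MonotoneOn b (Set.Ici 1) := fun i hi j _ hij => hmono i j hi hij
  simp only [← rookMatrix_natCast hb]
  exact .of_forall_totallyNonnegUpTo fun n =>
    rookMatrix_totallyNonnegUpTo n _ (Int.natCast_nonneg _) (Nat.mono_cast.comp_monotoneOn hb)

theorem stmt3 (b : ℕ → ℕ) (hpos : ∀ i, 1 ≤ i → 0 < b i)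
    (hmono : ∀ i j, 1 ≤ i → i ≤ j → b i ≤ b j) :
    TotallyNonneg (fun m k => if k ≤ m then (rookNum b m (m - k) : ℝ) else 0) :=
  stmt3_general b hmono
end

section
/- Let G be a chordal graph on n vertices with perfect elimination order v_1, ..., v_n, and for 1 ≤ m ≤ n let G_m be the subgraph of G induced by v_1, ..., v_m (with G_0 the empty graph). Let S_G be the (n+1)×(n+1) matrix with rows and columns indexed by {0, 1, ..., n} whose (m,k) entry is {G_m brace k}, and let s_G = S_G^{-1}. Then for all 0 ≤ m, k ≤ n, the (m,k) entry of s_G has sign (-1)^{m-k}, i.e., (-1)^{m-k} · s_G(m,k) ≥ 0. -/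
/-- The ordering `0 < 1 < ⋯ < n-1` of the vertices of `G` is a perfect elimination
order: for each vertex `k`, its neighbors among the earlier vertices form a clique.
(A graph is chordal iff it admits a perfect elimination order.) -/
def IsPEO {n : ℕ} (G : SimpleGraph (Fin n)) : Prop :=
  ∀ k i j : Fin n, i < k → j < k → i ≠ j → G.Adj i k → G.Adj j k → G.Adj i j

/-- The graph Stirling number of the second kind `{G_m brace k}` of the subgraph
`G_m` of `G` induced by the first `m` vertices: the number of partitions of the
vertex set of `G_m` into `k` non-empty independent sets. -/
noncomputable def graphStirlingInduced {n : ℕ} (G : SimpleGraph (Fin n)) (m k : ℕ) : ℕ :=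
  Nat.card {P : Finset (Finset (Fin n)) //
    P.card = k ∧
    (∀ B ∈ P, B.Nonempty) ∧
    (∀ B ∈ P, ∀ v ∈ B, (v : ℕ) < m) ∧
    (∀ v : Fin n, (v : ℕ) < m → ∃! B, B ∈ P ∧ v ∈ B) ∧
    ∀ B ∈ P, ∀ u ∈ B, ∀ w ∈ B, ¬ G.Adj u w}

/-!
Let `d j` be the number of neighbours of `v_j` among `v_0, …, v_{j-1}`; they form a clique. In a
partition of `G_j` into `k` independent blocks these neighbours lie in `d j` distinct blocks, so
`v_j` can be added as a new singleton block or to one of the `k - d j` blocks without a neighbour: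
`{G_{j+1} brace k} = {G_j brace k-1} + (k - d j) {G_j brace k}`. Hence `S_G` is the matrix of
connection coefficients expressing `∏_{j<m} (x - d j)` in the falling factorials `∏_{i<k} (x - i)`,
and its inverse expresses the falling factorials in the products, with the recurrence
`s(m+1,k) = s(m,k-1) - (m - d k) s(m,k)`. As `d k ≤ k`, the factor `m - d k` is nonnegative whenever
`s(m,k) ≠ 0`, and the signs alternate by induction.
-/

open Finset

section ConnectionCoefficients

variable {R : Type*} [CommRing R] {a b : ℕ → R}

/-- The coefficient of `∏ i < k, (X - b i)` in `∏ j < m, (X - a j)`; the recurrence comes from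
`(X - a m) * ∏ i < k, (X - b i) = ∏ i < k + 1, (X - b i) + (b k - a m) * ∏ i < k, (X - b i)`. -/
def connCoeff (a b : ℕ → R) : ℕ → ℕ → R
  | 0, 0 => 1
  | 0, _ + 1 => 0
  | m + 1, 0 => (b 0 - a m) * connCoeff a b m 0
  | m + 1, k + 1 => connCoeff a b m k + (b (k + 1) - a m) * connCoeff a b m (k + 1)

lemma connCoeff_zero_left (k : ℕ) : connCoeff a b 0 k = if k = 0 then 1 else 0 := by
  cases k <;> rfl

lemma connCoeff_eq_zero_of_lt {m k : ℕ} (h : m < k) : connCoeff a b m k = 0 := by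
  induction m generalizing k with
  | zero => rw [connCoeff_zero_left, if_neg h.ne']
  | succ m ih =>
    obtain ⟨k, rfl⟩ := Nat.exists_eq_add_of_lt (Nat.zero_lt_of_lt h)
    rw [connCoeff, ih (by omega), ih (by omega), mul_zero, add_zero]

lemma sum_connCoeff_succ_mul {m N : ℕ} (hmN : m < N) (g : ℕ → R) :
    ∑ i ∈ range (N + 1), connCoeff a b (m + 1) i * g i =
      ∑ i ∈ range (N + 1), connCoeff a b m i * (g (i + 1) + (b i - a m) * g i) := by
  have hN : connCoeff a b m N = 0 := connCoeff_eq_zero_of_lt hmN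
  calc ∑ i ∈ range (N + 1), connCoeff a b (m + 1) i * g i
      = ∑ i ∈ range N, (connCoeff a b m i * g (i + 1) +
            connCoeff a b m (i + 1) * ((b (i + 1) - a m) * g (i + 1))) +
          connCoeff a b m 0 * ((b 0 - a m) * g 0) := by
        rw [sum_range_succ']
        congr 1
        · exact sum_congr rfl fun i _ => by rw [connCoeff]; ring
        · rw [connCoeff]; ring
    _ = _ := by
        simp only [mul_add, sum_add_distrib]
        rw [sum_range_succ _ N, hN, zero_mul, add_zero,
          sum_range_succ' (fun i => connCoeff a b m i * ((b i - a m) * g i))]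
        ring

theorem sum_connCoeff_mul_connCoeff {m N : ℕ} (hmN : m ≤ N) (k : ℕ) :
    ∑ i ∈ range (N + 1), connCoeff b a m i * connCoeff a b i k = if m = k then 1 else 0 := by
  induction m generalizing k with
  | zero =>
    rw [sum_eq_single_of_mem 0 (mem_range.2 N.succ_pos), connCoeff_zero_left, if_pos rfl, one_mul,
      connCoeff_zero_left]
    · simp only [eq_comm]
    · intro i _ hi
      rw [connCoeff_zero_left, if_neg hi, zero_mul]
  | succ m ih =>
    rw [sum_connCoeff_succ_mul hmN]
    cases k with
    | zero =>
      have h : ∀ i, connCoeff a b (i + 1) 0 + (a i - b m) * connCoeff a b i 0 =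
          (b 0 - b m) * connCoeff a b i 0 := fun i => by rw [connCoeff]; ring
      simp only [h, mul_left_comm _ (b 0 - b m), ← mul_sum, ih (by omega)]
      rw [if_neg m.succ_ne_zero]
      split_ifs with hm
      · rw [hm, sub_self, zero_mul]
      · rw [mul_zero]
    | succ k =>
      have h : ∀ i, connCoeff a b (i + 1) (k + 1) + (a i - b m) * connCoeff a b i (k + 1) =
          connCoeff a b i k + (b (k + 1) - b m) * connCoeff a b i (k + 1) :=
        fun i => by rw [connCoeff]; ring
      simp only [h, mul_add, sum_add_distrib, mul_left_comm _ (b (k + 1) - b m), ← mul_sum,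
        ih (by omega)]
      by_cases h₁ : m = k
      · subst h₁; simp
      · by_cases h₂ : m = k + 1
        · subst h₂; simp
        · simp [h₁, h₂]

theorem inv_of_connCoeff (N : ℕ) :
    (Matrix.of fun i j : Fin (N + 1) => connCoeff a b i j)⁻¹ =
      Matrix.of fun i j : Fin (N + 1) => connCoeff b a i j := by
  refine Matrix.inv_eq_left_inv ?_
  ext i k
  simp only [Matrix.mul_apply, Matrix.of_apply]
  rw [Fin.sum_univ_eq_sum_range (fun t => connCoeff b a i t * connCoeff a b t k),
    sum_connCoeff_mul_connCoeff (Nat.lt_succ_iff.1 i.isLt), Matrix.one_apply]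
  simp only [Fin.val_inj]

theorem neg_one_pow_mul_connCoeff_nonneg [LinearOrder R] [IsStrictOrderedRing R]
    (hab : ∀ k m, k ≤ m → b k ≤ a m) (m k : ℕ) : 0 ≤ (-1) ^ (m + k) * connCoeff a b m k := by
  induction m generalizing k with
  | zero => rw [connCoeff_zero_left]; split_ifs <;> simp_all
  | succ m ih =>
    cases k with
    | zero =>
      have h : (-1) ^ (m + 1 + 0) * connCoeff a b (m + 1) 0 =
          (a m - b 0) * ((-1) ^ (m + 0) * connCoeff a b m 0) := by rw [connCoeff]; ring
      rw [h]
      exact mul_nonneg (sub_nonneg.2 (hab 0 m m.zero_le)) (ih 0)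
    | succ k =>
      have h : (-1) ^ (m + 1 + (k + 1)) * connCoeff a b (m + 1) (k + 1) =
          (-1) ^ (m + k) * connCoeff a b m k +
            (a m - b (k + 1)) * ((-1) ^ (m + (k + 1)) * connCoeff a b m (k + 1)) := by
        rw [connCoeff]; ring
      rw [h]
      refine add_nonneg (ih k) ?_
      rcases le_or_gt (k + 1) m with hkm | hmk
      · exact mul_nonneg (sub_nonneg.2 (hab _ _ hkm)) (ih (k + 1))
      · rw [connCoeff_eq_zero_of_lt hmk, mul_zero, mul_zero]

end ConnectionCoefficients

structure IsIndepPartition {V : Type*} (G : SimpleGraph V) (s : Finset V)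
    (P : Finset (Finset V)) : Prop where
  nonempty : ∀ B ∈ P, B.Nonempty
  subset : ∀ B ∈ P, B ⊆ s
  existsUnique : ∀ v ∈ s, ∃! B, B ∈ P ∧ v ∈ B
  indep : ∀ B ∈ P, ∀ u ∈ B, ∀ w ∈ B, ¬ G.Adj u w

namespace IsIndepPartition

variable {V : Type*} {G : SimpleGraph V} {s : Finset V} {P : Finset (Finset V)}
  {B C : Finset V} {v : V}

lemma exists_mem (hP : IsIndepPartition G s P) (hv : v ∈ s) : ∃ B ∈ P, v ∈ B :=
  (hP.existsUnique v hv).exists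

lemma eq_of_mem (hP : IsIndepPartition G s P) (hB : B ∈ P) (hC : C ∈ P) (hvB : v ∈ B)
    (hvC : v ∈ C) : B = C :=
  (hP.existsUnique v (hP.subset B hB hvB)).unique ⟨hB, hvB⟩ ⟨hC, hvC⟩

lemma notMem_of_notMem_of_mem (hP : IsIndepPartition G s P) (hv : v ∉ s) (hvB : v ∈ B) : B ∉ P :=
  fun hB => hv (hP.subset B hB hvB)

variable [DecidableEq V]

lemma erase_notMem (hP : IsIndepPartition G s P) (hB : B ∈ P) (hvB : v ∈ B)
    (hne : (B.erase v).Nonempty) : B.erase v ∉ P := by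
  intro h
  obtain ⟨x, hx⟩ := hne
  have := hP.eq_of_mem h hB hx (mem_of_mem_erase hx)
  exact notMem_erase v B (by rwa [this])

lemma sdiff (hP : IsIndepPartition G s P) (hB : B ∈ P) :
    IsIndepPartition G (s \ B) (P.erase B) where
  nonempty C hC := hP.nonempty C (mem_of_mem_erase hC)
  subset C hC := by
    refine subset_sdiff.2 ⟨hP.subset C (mem_of_mem_erase hC), disjoint_left.2 fun x hxC hxB => ?_⟩
    exact ne_of_mem_erase hC (hP.eq_of_mem (mem_of_mem_erase hC) hB hxC hxB)
  existsUnique v hv := by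
    obtain ⟨hvs, hvB⟩ := mem_sdiff.1 hv
    obtain ⟨C, ⟨hC, hvC⟩, huniq⟩ := hP.existsUnique v hvs
    refine ⟨C, ⟨mem_erase.2 ⟨fun h => hvB (h ▸ hvC), hC⟩, hvC⟩, fun D hD => ?_⟩
    exact huniq D ⟨mem_of_mem_erase hD.1, hD.2⟩
  indep C hC := hP.indep C (mem_of_mem_erase hC)

lemma union (hP : IsIndepPartition G s P) (hB : B.Nonempty)
    (hBind : ∀ u ∈ B, ∀ w ∈ B, ¬ G.Adj u w) (hBs : Disjoint B s) :
    IsIndepPartition G (B ∪ s) (insert B P) where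
  nonempty C hC := by
    rcases mem_insert.1 hC with rfl | hC
    exacts [hB, hP.nonempty C hC]
  subset C hC := by
    rcases mem_insert.1 hC with rfl | hC
    exacts [subset_union_left, (hP.subset C hC).trans subset_union_right]
  existsUnique v hv := by
    rcases mem_union.1 hv with hvB | hvs
    · refine ⟨B, ⟨mem_insert_self B P, hvB⟩, fun D ⟨hD, hvD⟩ => ?_⟩
      rcases mem_insert.1 hD with rfl | hD
      · rfl
      · exact absurd (hP.subset D hD hvD) (disjoint_left.1 hBs hvB)
    · obtain ⟨C, ⟨hC, hvC⟩, huniq⟩ := hP.existsUnique v hvs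
      refine ⟨C, ⟨mem_insert_of_mem hC, hvC⟩, fun D ⟨hD, hvD⟩ => ?_⟩
      rcases mem_insert.1 hD with rfl | hD
      · exact absurd hvs (disjoint_left.1 hBs hvD)
      · exact huniq D ⟨hD, hvD⟩
  indep C hC := by
    rcases mem_insert.1 hC with rfl | hC
    exacts [hBind, hP.indep C hC]

lemma insert_singleton (hP : IsIndepPartition G s P) (hv : v ∉ s) :
    IsIndepPartition G (insert v s) (insert {v} P) := by
  rw [insert_eq]
  refine hP.union (singleton_nonempty v) ?_ (disjoint_singleton_left.2 hv)
  simp only [mem_singleton]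
  rintro u rfl w rfl
  exact G.irrefl

lemma erase_singleton (hP : IsIndepPartition G (insert v s) P) (hv : v ∉ s) (h : {v} ∈ P) :
    IsIndepPartition G s (P.erase {v}) := by
  simpa only [sdiff_singleton_eq_erase, erase_insert hv] using hP.sdiff h

lemma insert_into_block (hP : IsIndepPartition G s P) (hB : B ∈ P) (hv : v ∉ s)
    (hBv : ∀ u ∈ B, ¬ G.Adj u v) :
    IsIndepPartition G (insert v s) (insert (insert v B) (P.erase B)) := by
  have hvB : v ∉ B := fun h => hv (hP.subset B hB h)
  have hs : insert v B ∪ s \ B = insert v s := by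
    have := hP.subset B hB
    grind
  rw [← hs]
  refine (hP.sdiff hB).union (insert_nonempty v B) ?_ ?_
  · simp only [mem_insert]
    rintro u (rfl | hu) w (rfl | hw)
    exacts [G.irrefl, fun h => hBv w hw h.symm, hBv u hu, hP.indep B hB u hu w hw]
  · refine disjoint_insert_left.2 ⟨fun h => hv (mem_sdiff.1 h).1, disjoint_sdiff⟩

lemma remove_from_block (hP : IsIndepPartition G (insert v s) P) (hv : v ∉ s) (hB : B ∈ P)
    (hvB : v ∈ B) (hBv : B ≠ {v}) :
    IsIndepPartition G s (insert (B.erase v) (P.erase B)) := by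
  have hs : B.erase v ∪ insert v s \ B = s := by
    have := hP.subset B hB
    grind
  rw [← hs]
  refine (hP.sdiff hB).union ?_ ?_ ?_
  · exact ((nontrivial_iff_ne_singleton hvB).2 hBv).erase_nonempty
  · exact fun u hu w hw => hP.indep B hB u (mem_of_mem_erase hu) w (mem_of_mem_erase hw)
  · exact disjoint_of_subset_left (erase_subset v B) disjoint_sdiff

end IsIndepPartition

section Counting

variable {V : Type*} {G : SimpleGraph V} {s : Finset V} {v : V}

open Classical in
noncomputable def indepPartitions (G : SimpleGraph V) (s : Finset V) (k : ℕ) :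
    Finset (Finset (Finset V)) :=
  {P ∈ s.powerset.powerset | IsIndepPartition G s P ∧ #P = k}

lemma mem_indepPartitions {k : ℕ} {P : Finset (Finset V)} :
    P ∈ indepPartitions G s k ↔ IsIndepPartition G s P ∧ #P = k := by
  simp only [indepPartitions, mem_filter, mem_powerset, and_iff_right_iff_imp]
  exact fun h B hB => mem_powerset.2 (h.1.subset B hB)

lemma card_indepPartitions_empty (k : ℕ) :
    #(indepPartitions G ∅ k) = if k = 0 then 1 else 0 := by
  have h : ∀ P, IsIndepPartition G ∅ P ↔ P = ∅ := fun P => by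
    refine ⟨fun hP => eq_empty_of_forall_notMem fun B hB => ?_, ?_⟩
    · obtain ⟨x, hx⟩ := hP.nonempty B hB
      exact notMem_empty x (hP.subset B hB hx)
    · rintro rfl
      exact ⟨by simp, by simp, by simp, by simp⟩
  have : indepPartitions G ∅ k = if k = 0 then {∅} else ∅ := by
    ext P
    rw [mem_indepPartitions, h]
    split_ifs with hk <;> aesop
  rw [this]
  split_ifs <;> rfl

variable [DecidableEq V]

lemma card_filter_singleton_mem_indepPartitions (hv : v ∉ s) (k : ℕ) :
    #{P ∈ indepPartitions G (insert v s) (k + 1) | {v} ∈ P} = #(indepPartitions G s k) := by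
  refine card_nbij' (fun P => P.erase {v}) (insert {v}) ?_ ?_ ?_ ?_
  · intro P hP
    simp only [coe_filter, mem_indepPartitions, Set.mem_ofPred_eq] at hP
    obtain ⟨⟨hP, hcard⟩, hvP⟩ := hP
    refine mem_indepPartitions.2 ⟨hP.erase_singleton hv hvP, ?_⟩
    rw [card_erase_of_mem hvP, hcard, Nat.add_sub_cancel]
  · intro Q hQ
    obtain ⟨hQ, hcard⟩ := mem_indepPartitions.1 hQ
    have hvQ : {v} ∉ Q := hQ.notMem_of_notMem_of_mem hv (mem_singleton_self v)
    simp only [coe_filter, mem_indepPartitions, Set.mem_ofPred_eq]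
    exact ⟨⟨hQ.insert_singleton hv, by rw [card_insert_of_notMem hvQ, hcard]⟩, mem_insert_self _ _⟩
  · intro P hP
    exact insert_erase (mem_filter.1 hP).2
  · intro Q hQ
    exact erase_insert
      ((mem_indepPartitions.1 hQ).1.notMem_of_notMem_of_mem hv (mem_singleton_self v))

variable [DecidableRel G.Adj]

lemma IsIndepPartition.card_filter_exists_adj {P : Finset (Finset V)} (hP : IsIndepPartition G s P)
    (hN : G.IsClique ({u ∈ s | G.Adj u v} : Set V)) :
    #{B ∈ P | ∃ u ∈ B, G.Adj u v} = #{u ∈ s | G.Adj u v} := by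
  symm
  refine card_bij (fun u hu => (hP.exists_mem (mem_filter.1 hu).1).choose) ?_ ?_ ?_
  · intro u hu
    obtain ⟨hB, huB⟩ := (hP.exists_mem (mem_filter.1 hu).1).choose_spec
    exact mem_filter.2 ⟨hB, u, huB, (mem_filter.1 hu).2⟩
  · intro u₁ hu₁ u₂ hu₂ heq
    obtain ⟨hB, hu₁B⟩ := (hP.exists_mem (mem_filter.1 hu₁).1).choose_spec
    obtain ⟨-, hu₂B⟩ := (hP.exists_mem (mem_filter.1 hu₂).1).choose_spec
    rw [← heq] at hu₂B
    by_contra hne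
    exact hP.indep _ hB u₁ hu₁B u₂ hu₂B (hN (by simpa using hu₁) (by simpa using hu₂) hne)
  · intro B hB
    obtain ⟨hBP, u, huB, huv⟩ := mem_filter.1 hB
    have hu : u ∈ {u ∈ s | G.Adj u v} := mem_filter.2 ⟨hP.subset B hBP huB, huv⟩
    obtain ⟨hC, huC⟩ := (hP.exists_mem (mem_filter.1 hu).1).choose_spec
    exact ⟨u, hu, hP.eq_of_mem hC hBP huC huB⟩

lemma card_filter_singleton_notMem_indepPartitions (hv : v ∉ s) (k : ℕ) :
    #{P ∈ indepPartitions G (insert v s) k | {v} ∉ P} =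
      ∑ Q ∈ indepPartitions G s k, #{B ∈ Q | ∀ u ∈ B, ¬ G.Adj u v} := by
  rw [← card_sigma]
  symm
  refine card_nbij (fun p => insert (insert v p.2) (p.1.erase p.2)) ?_ ?_ ?_
  · rintro ⟨Q, B⟩ hp
    simp only [coe_sigma, Set.mem_sigma_iff, mem_coe, mem_filter, mem_indepPartitions] at hp ⊢
    obtain ⟨⟨hQ, hcard⟩, hB, hBv⟩ := hp
    have hvB : v ∉ B := fun h => hv (hQ.subset B hB h)
    have hnew : insert v B ∉ Q.erase B :=
      notMem_mono (erase_subset B Q) (hQ.notMem_of_notMem_of_mem hv (mem_insert_self v B))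
    refine ⟨⟨hQ.insert_into_block hB hv hBv, ?_⟩, fun h => ?_⟩
    · rw [card_insert_of_notMem hnew, card_erase_add_one hB, hcard]
    · rcases mem_insert.1 h with h | h
      · obtain ⟨x, hx⟩ := hQ.nonempty B hB
        have : x = v := mem_singleton.1 (h ▸ mem_insert_of_mem hx)
        exact hvB (this ▸ hx)
      · exact hQ.notMem_of_notMem_of_mem hv (mem_singleton_self v) (mem_of_mem_erase h)
  · rintro ⟨Q₁, B₁⟩ hp₁ ⟨Q₂, B₂⟩ hp₂ heq
    simp only [coe_sigma, Set.mem_sigma_iff, mem_coe, mem_filter, mem_indepPartitions] at hp₁ hp₂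
    obtain ⟨⟨hQ₁, -⟩, hB₁, hB₁v⟩ := hp₁
    obtain ⟨⟨hQ₂, -⟩, hB₂, -⟩ := hp₂
    dsimp only at heq
    have hvB₁ : v ∉ B₁ := fun h => hv (hQ₁.subset B₁ hB₁ h)
    have hvB₂ : v ∉ B₂ := fun h => hv (hQ₂.subset B₂ hB₂ h)
    have hP := hQ₁.insert_into_block hB₁ hv hB₁v
    have hblock : insert v B₁ = insert v B₂ :=
      hP.eq_of_mem (mem_insert_self _ _) (heq ▸ mem_insert_self _ _) (mem_insert_self v B₁)
        (mem_insert_self v B₂)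
    obtain rfl : B₁ = B₂ := by rw [← erase_insert hvB₁, hblock, erase_insert hvB₂]
    have hrest : Q₁.erase B₁ = Q₂.erase B₁ := by
      rw [← erase_insert (notMem_mono (erase_subset B₁ Q₁)
          (hQ₁.notMem_of_notMem_of_mem hv (mem_insert_self v B₁))), heq,
        erase_insert (notMem_mono (erase_subset B₁ Q₂)
          (hQ₂.notMem_of_notMem_of_mem hv (mem_insert_self v B₁)))]
    rw [← insert_erase hB₁, hrest, insert_erase hB₂]
  · intro P hP
    simp only [coe_filter, mem_indepPartitions, Set.mem_ofPred_eq] at hP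
    obtain ⟨⟨hP, hcard⟩, hvP⟩ := hP
    obtain ⟨B, hB, hvB⟩ := hP.exists_mem (mem_insert_self v s)
    have hBv : B ≠ {v} := fun h => hvP (h ▸ hB)
    have hne : (B.erase v).Nonempty := ((nontrivial_iff_ne_singleton hvB).2 hBv).erase_nonempty
    have hold : B.erase v ∉ P.erase B := fun h => hP.erase_notMem hB hvB hne (mem_of_mem_erase h)
    refine ⟨⟨insert (B.erase v) (P.erase B), B.erase v⟩, ?_, ?_⟩
    · simp only [coe_sigma, Set.mem_sigma_iff, mem_coe, mem_filter, mem_indepPartitions]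
      refine ⟨⟨hP.remove_from_block hv hB hvB hBv, ?_⟩, mem_insert_self _ _, fun u hu =>
        hP.indep B hB u (mem_of_mem_erase hu) v hvB⟩
      rw [card_insert_of_notMem hold, card_erase_add_one hB, hcard]
    · simp only [insert_erase hvB, erase_insert hold, insert_erase hB]

theorem card_indepPartitions_insert_add (hv : v ∉ s)
    (hN : G.IsClique ({u ∈ s | G.Adj u v} : Set V)) (k : ℕ) :
    #(indepPartitions G (insert v s) k) + #{u ∈ s | G.Adj u v} * #(indepPartitions G s k) =
      #{P ∈ indepPartitions G (insert v s) k | {v} ∈ P} + k * #(indepPartitions G s k) := by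
  have hblocks : ∀ Q ∈ indepPartitions G s k,
      #{B ∈ Q | ∀ u ∈ B, ¬ G.Adj u v} + #{u ∈ s | G.Adj u v} = k := by
    intro Q hQ
    obtain ⟨hQ, hcard⟩ := mem_indepPartitions.1 hQ
    rw [← hQ.card_filter_exists_adj hN, ← hcard,
      ← card_filter_add_card_filter_not (s := Q) (fun B => ∀ u ∈ B, ¬ G.Adj u v)]
    simp only [not_forall, not_not, exists_prop]
  rw [← card_filter_add_card_filter_not (s := indepPartitions G (insert v s) k) (fun P => {v} ∈ P),
    card_filter_singleton_notMem_indepPartitions hv, add_assoc]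
  congr 1
  calc ∑ Q ∈ indepPartitions G s k, #{B ∈ Q | ∀ u ∈ B, ¬ G.Adj u v} +
        #{u ∈ s | G.Adj u v} * #(indepPartitions G s k)
      = ∑ Q ∈ indepPartitions G s k, (#{B ∈ Q | ∀ u ∈ B, ¬ G.Adj u v} + #{u ∈ s | G.Adj u v}) := by
        rw [sum_add_distrib, sum_const, smul_eq_mul, mul_comm]
    _ = k * #(indepPartitions G s k) := by rw [sum_const_nat hblocks, mul_comm]

end Counting

section PerfectEliminationOrder

variable {n : ℕ} {G : SimpleGraph (Fin n)}

def firstVertices (n j : ℕ) : Finset (Fin n) := {v | (v : ℕ) < j}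

lemma mem_firstVertices {j : ℕ} {v : Fin n} : v ∈ firstVertices n j ↔ (v : ℕ) < j := by
  simp [firstVertices]

lemma firstVertices_zero : firstVertices n 0 = ∅ := by
  ext v
  simp [mem_firstVertices]

lemma card_firstVertices_le (j : ℕ) : #(firstVertices n j) ≤ j := by
  refine (card_le_card_of_injOn Fin.val (fun v hv => ?_) Fin.val_injective.injOn).trans_eq
    (card_range j)
  exact mem_range.2 (mem_firstVertices.1 hv)

lemma insert_firstVertices {j : ℕ} (hj : j < n) :
    insert ⟨j, hj⟩ (firstVertices n j) = firstVertices n (j + 1) := by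
  ext v
  simp only [mem_insert, mem_firstVertices, Fin.ext_iff]
  omega

lemma graphStirlingInduced_eq_card (m k : ℕ) :
    graphStirlingInduced G m k = #(indepPartitions G (firstVertices n m) k) := by
  rw [graphStirlingInduced, ← Nat.card_eq_finsetCard]
  refine Nat.card_congr (Equiv.subtypeEquivRight fun P => ?_)
  simp only [mem_indepPartitions]
  constructor
  · rintro ⟨hk, hne, hsub, hcov, hind⟩
    exact ⟨⟨hne, fun B hB v hv => mem_firstVertices.2 (hsub B hB v hv),
      fun v hv => hcov v (mem_firstVertices.1 hv), hind⟩, hk⟩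
  · rintro ⟨⟨hne, hsub, hcov, hind⟩, hk⟩
    exact ⟨hk, hne, fun B hB v hv => mem_firstVertices.1 (hsub B hB hv),
      fun v hv => hcov v (mem_firstVertices.2 hv), hind⟩

lemma IsPEO.isClique_adj_firstVertices (hG : IsPEO G) {j : ℕ} (hj : j < n) :
    G.IsClique ({u ∈ firstVertices n j | G.Adj u ⟨j, hj⟩} : Set (Fin n)) := by
  intro u hu w hw hne
  simp only [mem_firstVertices, Set.mem_ofPred_eq] at hu hw
  exact hG ⟨j, hj⟩ u w (Fin.lt_def.2 hu.1) (Fin.lt_def.2 hw.1) hne hu.2 hw.2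

def earlierDegree (G : SimpleGraph (Fin n)) [DecidableRel G.Adj] (j : ℕ) : ℕ :=
  if h : j < n then #{u ∈ firstVertices n j | G.Adj u ⟨j, h⟩} else 0

variable [DecidableRel G.Adj]

lemma earlierDegree_le (j : ℕ) : earlierDegree G j ≤ j := by
  unfold earlierDegree
  split_ifs
  exacts [(card_filter_le _ _).trans (card_firstVertices_le j), j.zero_le]

theorem graphStirlingInduced_eq_connCoeff {R : Type*} [CommRing R] (hG : IsPEO G) {m : ℕ}
    (hm : m ≤ n) (k : ℕ) :
    (graphStirlingInduced G m k : R) =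
      connCoeff (fun j => (earlierDegree G j : R)) (fun i => (i : R)) m k := by
  induction m generalizing k with
  | zero =>
    rw [graphStirlingInduced_eq_card, firstVertices_zero, card_indepPartitions_empty,
      connCoeff_zero_left]
    split_ifs <;> simp
  | succ m ih =>
    have hmn : m < n := hm
    have hv : (⟨m, hmn⟩ : Fin n) ∉ firstVertices n m := by simp [mem_firstVertices]
    have key := card_indepPartitions_insert_add hv (hG.isClique_adj_firstVertices hmn) k
    have hd : earlierDegree G m = #{u ∈ firstVertices n m | G.Adj u ⟨m, hmn⟩} := dif_pos hmn
    simp only [graphStirlingInduced_eq_card] at ih ⊢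
    cases k with
    | zero =>
      have h0 : #{P ∈ indepPartitions G (insert ⟨m, hmn⟩ (firstVertices n m)) 0 |
          {⟨m, hmn⟩} ∈ P} = 0 := by
        refine card_eq_zero.2 (filter_eq_empty_iff.2 fun P hP => ?_)
        simp [card_eq_zero.1 (mem_indepPartitions.1 hP).2]
      rw [h0, insert_firstVertices hmn] at key
      rw [connCoeff, ← ih hmn.le, hd]
      have := congrArg (Nat.cast : ℕ → R) key
      push_cast at this ⊢
      linear_combination this
    | succ k =>
      rw [card_filter_singleton_mem_indepPartitions hv, insert_firstVertices hmn] at key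
      rw [connCoeff, ← ih hmn.le, ← ih hmn.le, hd]
      have := congrArg (Nat.cast : ℕ → R) key
      push_cast at this ⊢
      linear_combination this

end PerfectEliminationOrder

theorem stmt4 {n : ℕ} (G : SimpleGraph (Fin n)) (hG : IsPEO G) (m k : Fin (n + 1)) :
    0 ≤ (-1 : ℝ) ^ ((m : ℕ) + (k : ℕ)) *
      (Matrix.of fun i j : Fin (n + 1) => (graphStirlingInduced G i j : ℝ))⁻¹ m k := by
  classical
  have hS : (Matrix.of fun i j : Fin (n + 1) => (graphStirlingInduced G i j : ℝ)) =
      Matrix.of fun i j : Fin (n + 1) =>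
        connCoeff (fun j => (earlierDegree G j : ℝ)) (fun i => (i : ℝ)) i j := by
    ext i j
    exact graphStirlingInduced_eq_connCoeff hG (Nat.lt_succ_iff.1 i.isLt) j
  rw [hS, inv_of_connCoeff, Matrix.of_apply]
  exact neg_one_pow_mul_connCoeff_nonneg
    (fun k m hkm => by exact_mod_cast (earlierDegree_le k).trans hkm) m k
end

section
/- Let G be a chordal graph on n vertices with perfect elimination order v_1, ..., v_n, and for each i let e_i(G) be the number of neighbors of v_i among v_1, ..., v_{i-1}. Then (e_1(G), ..., e_n(G)) is a restricted growth sequence relative to (0, 1, ..., n-1); equivalently, e_1(G) = 0 and e_{k}(G) ≤ 1 + max_{i < k} e_i(G) for all 1 < k ≤ n. -/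
/-- The number of neighbors of `v` among the earlier vertices. -/
noncomputable def earlierNbrs {n : ℕ} (G : SimpleGraph (Fin n)) (v : Fin n) : ℕ :=
  Nat.card {j : Fin n // j < v ∧ G.Adj j v}

/-- The sequence `(e_1(G), …, e_n(G))` (0-indexed, extended by `0`), as reals. -/
noncomputable def eSeq {n : ℕ} (G : SimpleGraph (Fin n)) : ℕ → ℝ :=
  fun i => if h : i < n then (earlierNbrs G ⟨i, h⟩ : ℝ) else 0

/-!
If `v` has earlier neighbours and `j` is the latest of them, the perfect elimination property makes
every other earlier neighbour of `v` an earlier neighbour of `j`, so `e_v ≤ e_j + 1`. Thus each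
term of the integer sequence `e` is `0` or at most one more than an earlier term, and such a
sequence stays below the cap of the restricted growth sequence relative to `(0, 1, 2, …)`, which is
always one more than the maximum of the terms so far.
-/

lemma earlierNbrs_eq_ncard {n : ℕ} (G : SimpleGraph (Fin n)) (v : Fin n) :
    earlierNbrs G v = {j | j < v ∧ G.Adj j v}.ncard :=
  rfl

theorem IsPEO.exists_earlierNbrs_le_succ {n : ℕ} {G : SimpleGraph (Fin n)} (hG : IsPEO G)
    {v : Fin n} (hv : 0 < earlierNbrs G v) :
    ∃ j < v, earlierNbrs G v ≤ earlierNbrs G j + 1 := by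
  rw [earlierNbrs_eq_ncard, Set.ncard_pos] at hv
  obtain ⟨j, ⟨hjv, hGjv⟩, hj_max⟩ := Set.exists_max_image _ id (Set.toFinite _) hv
  refine ⟨j, hjv, ?_⟩
  have hsub : {k | k < v ∧ G.Adj k v} \ {j} ⊆ {k | k < j ∧ G.Adj k j} := by
    rintro k ⟨⟨hkv, hGkv⟩, hkj : k ≠ j⟩
    exact ⟨(hj_max k ⟨hkv, hGkv⟩).lt_of_ne hkj, hG v k j hkv hjv hkj hGkv hGjv⟩
  rw [earlierNbrs_eq_ncard, earlierNbrs_eq_ncard,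
    ← Set.ncard_sdiff_singleton_add_one (show j ∈ {k | k < v ∧ G.Adj k v} from ⟨hjv, hGjv⟩)]
  exact Nat.add_le_add_right (Set.ncard_le_ncard hsub) 1

section RestrictedGrowth

variable {e : ℕ → ℝ}

local notation "F" => rgsF (fun t : ℕ => (t : ℝ)) e

lemma rgsF_le_rgsF_succ (i : ℕ) : F i ≤ F (i + 1) := by
  rw [rgsF]
  split_ifs <;> omega

lemma le_rgsF_of_forall_lt (hgrowth : ∀ i, e i ≤ 0 ∨ ∃ j < i, e i ≤ e j + 1) {i : ℕ} (hi : ∀ j < i, e j + 1 ≤ F i) : e i ≤ F i := by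
  rcases hgrowth i with he | ⟨j, hji, hej⟩
  · exact he.trans (Nat.cast_nonneg _)
  · exact hej.trans (hi j hji)

/-- A term equal to its cap raises the cap by one, and an integer term below its cap is at
least one below it. -/
lemma add_one_le_rgsF_of_lt (hnat : ∀ i, ∃ k : ℕ, e i = k)
    (hgrowth : ∀ i, e i ≤ 0 ∨ ∃ j < i, e i ≤ e j + 1) : ∀ i, ∀ j < i, e j + 1 ≤ F i
  | 0, _, hj => absurd hj (Nat.not_lt_zero _)
  | i + 1, j, hj => by
    have ih := add_one_le_rgsF_of_lt hnat hgrowth i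
    rcases Nat.lt_succ_iff_lt_or_eq.mp hj with hji | rfl
    · exact (ih j hji).trans (by exact_mod_cast rgsF_le_rgsF_succ i)
    · have hle := le_rgsF_of_forall_lt hgrowth ih
      obtain ⟨k, hk⟩ := hnat j
      rw [rgsF]
      split_ifs with heq
      · rw [heq, Nat.cast_succ]
      · rw [hk] at hle heq ⊢
        exact_mod_cast Nat.lt_of_le_of_ne (Nat.cast_le.mp hle) (by exact_mod_cast heq)

theorem le_rgsF_of_growth (hnat : ∀ i, ∃ k : ℕ, e i = k)
    (hgrowth : ∀ i, e i ≤ 0 ∨ ∃ j < i, e i ≤ e j + 1) (i : ℕ) : e i ≤ F i :=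
  le_rgsF_of_forall_lt hgrowth (add_one_le_rgsF_of_lt hnat hgrowth i)

end RestrictedGrowth

lemma exists_eSeq_eq_natCast {n : ℕ} (G : SimpleGraph (Fin n)) (i : ℕ) :
    ∃ k : ℕ, eSeq G i = k := by
  unfold eSeq
  split_ifs
  exacts [⟨_, rfl⟩, ⟨0, Nat.cast_zero.symm⟩]

lemma IsPEO.eSeq_growth {n : ℕ} {G : SimpleGraph (Fin n)} (hG : IsPEO G) (i : ℕ) :
    eSeq G i ≤ 0 ∨ ∃ j < i, eSeq G i ≤ eSeq G j + 1 := by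
  unfold eSeq
  by_cases hi : i < n
  · rcases (earlierNbrs G ⟨i, hi⟩).eq_zero_or_pos with h0 | hpos
    · simp [hi, h0]
    · obtain ⟨j, hji, hj⟩ := hG.exists_earlierNbrs_le_succ hpos
      refine Or.inr ⟨j, hji, ?_⟩
      simp only [hi, j.isLt, dif_pos]
      exact_mod_cast hj
  · simp [hi]

/-- For a chordal graph with perfect elimination order `v_1, …, v_n`, the sequence
`(e_1(G), …, e_n(G))` is a restricted growth sequence relative to `(0, 1, …, n-1)`. -/
theorem stmt6 {n : ℕ} (G : SimpleGraph (Fin n)) (hG : IsPEO G) :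
    ∀ i < n, eSeq G i ≤ ((rgsF (fun t => (t : ℝ)) (eSeq G) i : ℕ) : ℝ) :=
  fun i _ => le_rgsF_of_growth (exists_eSeq_eq_natCast G) hG.eSeq_growth i
end

section
/- Let (e'_1, ..., e'_n) be a sequence of non-negative integers with e'_1 = 0 and e'_{i+1} ≤ 1 + max_{j ≤ i} e'_j for all 1 ≤ i < n (i.e., a restricted growth sequence relative to (0, 1, ..., n-1)). Then there exists a chordal graph G on vertices v_1, ..., v_n such that v_1, ..., v_n is a perfect elimination order of G and, for each i, the number of neighbors of v_i among v_1, ..., v_{i-1} equals e'_i. -/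
open Finset

lemma Fin.natCard_lt_and_eq_card_filter_range {n : ℕ} (v : Fin n) (p : ℕ → Prop)
    [DecidablePred p] : Nat.card {j : Fin n // j < v ∧ p j} = ((range v).filter p).card := by
  rw [← Nat.card_eq_finsetCard]
  refine Nat.card_congr
    { toFun := fun j => ⟨j.1, by simpa using j.2⟩
      invFun := fun a => ⟨⟨a, ?_⟩, ?_⟩
      left_inv := fun _ => rfl
      right_inv := fun _ => rfl }
  · exact (mem_range.1 (mem_filter.1 a.2).1).trans v.isLt
  · simpa [Fin.lt_def] using (mem_filter.1 a.2)

def IsRecord (e : ℕ → ℕ) (j : ℕ) : Prop := ∀ l < j, e l < e j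

instance (e : ℕ → ℕ) : DecidablePred (IsRecord e) := fun j =>
  inferInstanceAs (Decidable (∀ l < j, e l < e j))

namespace IsRecord

variable {e : ℕ → ℕ}

lemma zero : IsRecord e 0 := fun _ h => absurd h (Nat.not_lt_zero _)

lemma injOn : Set.InjOn e {j | IsRecord e j} := by
  intro a ha b hb hab
  by_contra hne
  rcases Nat.lt_or_gt_of_ne hne with h | h
  · exact (hb a h).ne hab
  · exact (ha b h).ne' hab

end IsRecord

lemma image_filter_isRecord_range (e : ℕ → ℕ) (n : ℕ) (h0 : e 0 = 0)
    (hrg : ∀ i, 0 < i → i < n → e i ≤ 1 + (range i).sup e) {i : ℕ} (hi : 0 < i)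
    (hin : i ≤ n) :
    ((range i).filter (IsRecord e)).image e = range ((range i).sup e + 1) := by
  induction i, hi using Nat.le_induction with
  | base => simp [filter_singleton, IsRecord.zero, h0]
  | succ i hi ih =>
    have ih := ih (by omega)
    rw [range_add_one, filter_insert, sup_insert]
    split_ifs with hrec
    · have hsup : (range i).sup e < e i :=
        (Finset.sup_lt_iff (hrec 0 hi).bot_lt).2 fun l hl => hrec l (mem_range.1 hl)
      have hnext : e i = (range i).sup e + 1 := by have := hrg i hi (by omega); omega
      rw [image_insert, ih, hnext, ← range_add_one, max_eq_left (by omega)]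
    · obtain ⟨l, hl, hle⟩ : ∃ l < i, e i ≤ e l := by simpa [IsRecord] using hrec
      rw [ih, max_eq_right (hle.trans (le_sup (mem_range.2 hl)))]

lemma card_filter_isRecord_lt (e : ℕ → ℕ) (n : ℕ) (h0 : 0 < n → e 0 = 0)
    (hrg : ∀ i, 0 < i → i < n → e i ≤ 1 + (range i).sup e) {i : ℕ} (hin : i < n) :
    ((range i).filter fun j => IsRecord e j ∧ e j < e i).card = e i := by
  rcases Nat.eq_zero_or_pos i with rfl | hi
  · simp [h0 hin]
  have himage := image_filter_isRecord_range e n (h0 (by omega)) hrg hi hin.le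
  have hle : e i ≤ (range i).sup e + 1 := by have := hrg i hi hin; omega
  have hinj : Set.InjOn e ((range i).filter (IsRecord e)) := fun a ha b hb =>
    IsRecord.injOn (mem_filter.1 ha).2 (mem_filter.1 hb).2
  have hrange : (range ((range i).sup e + 1)).filter (· < e i) = range (e i) := by
    ext; simp only [mem_filter, mem_range]; omega
  rw [← filter_filter, ← card_image_of_injOn (hinj.mono (filter_subset _ _)),
    ← filter_image (p := (· < e i)), himage, hrange, card_range]

def recordGraph (e : ℕ → ℕ) : SimpleGraph ℕ :=
  SimpleGraph.fromRel fun j i => IsRecord e j ∧ e j < e i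

section recordGraph

variable {e : ℕ → ℕ} {i j k : ℕ}

lemma recordGraph_adj_of_lt (hji : j < i) :
    (recordGraph e).Adj j i ↔ IsRecord e j ∧ e j < e i :=
  ⟨fun ⟨_, h⟩ => h.resolve_right fun ⟨hrec, hlt⟩ => (hrec j hji).not_gt hlt,
    fun h => ⟨hji.ne, Or.inl h⟩⟩

lemma recordGraph_adj_of_adj_of_adj (hik : i < k) (hjk : j < k) (hij : i ≠ j)
    (hi : (recordGraph e).Adj i k) (hj : (recordGraph e).Adj j k) : (recordGraph e).Adj i j := by
  obtain ⟨hirec, -⟩ := (recordGraph_adj_of_lt hik).1 hi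
  obtain ⟨hjrec, -⟩ := (recordGraph_adj_of_lt hjk).1 hj
  rcases Nat.lt_or_gt_of_ne hij with h | h
  · exact (recordGraph_adj_of_lt h).2 ⟨hirec, hjrec i h⟩
  · exact ((recordGraph_adj_of_lt h).2 ⟨hjrec, hirec j h⟩).symm

end recordGraph

/-- Any restricted growth sequence relative to `(0, 1, …, n-1)` — i.e. a sequence
of non-negative integers with `e'_1 = 0` and `e'_{i+1} ≤ 1 + max_{j ≤ i} e'_j`
(0-indexed here) — is realized as the earlier-neighbor counts of a chordal graph
for which the natural order is a perfect elimination order. -/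
theorem stmt7 (n : ℕ) (e' : ℕ → ℕ) (h0 : 0 < n → e' 0 = 0)
    (hrg : ∀ i, 0 < i → i < n → e' i ≤ 1 + (Finset.range i).sup e') :
    ∃ G : SimpleGraph (Fin n), IsPEO G ∧ ∀ v : Fin n, earlierNbrs G v = e' (v : ℕ) := by
  classical
  refine ⟨(recordGraph e').comap Fin.val, fun k i j hik hjk hij =>
    recordGraph_adj_of_adj_of_adj hik hjk (Fin.val_injective.ne hij), fun v => ?_⟩
  have hfilter : (range v).filter (fun j => (recordGraph e').Adj j v) =
      (range v).filter (fun j => IsRecord e' j ∧ e' j < e' v) :=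
    filter_congr fun j hj => recordGraph_adj_of_lt (mem_range.1 hj)
  refine (Fin.natCard_lt_and_eq_card_filter_range v fun j => (recordGraph e').Adj j v).trans ?_
  rw [hfilter, card_filter_isRecord_lt e' n h0 hrg v.isLt]
end

section
/- For arbitrary real sequences a = (a_1, a_2, ...) and e = (e_1, e_2, ...), and all m ≥ k ≥ 0, S^{a,e}(m,k) = ∑_{ℓ=0}^{m-k} (-1)^ℓ h_{m-k-ℓ}(a_1, ..., a_{k+1}) · σ_ℓ(e_1, ..., e_m), where h_d denotes the complete homogeneous symmetric polynomial of degree d and σ_ℓ denotes the elementary symmetric polynomial of degree ℓ. -/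
/-!
Write `N_k = ∏_{i<k} (X - a_i)`. These polynomials have degree `k`, so they are linearly
independent and `S(m, k)` is the `N_k`-coordinate of `∏_{i<m} (X - e_i)`. Coordinates are
linear, so it suffices to expand monomials: `X^n = ∑_{k ≤ n} h_{n-k}(a_0, …, a_k) N_k`, by
induction on `n` from `X N_k = N_{k+1} + a_k N_k` and the Pascal rule
`h_{d+1}(a_0, …, a_t) = h_{d+1}(a_0, …, a_{t-1}) + a_t h_d(a_0, …, a_t)`. Combining this with
Vieta's formula `∏_{i<m} (X - e_i) = ∑_ℓ (-1)^ℓ σ_ℓ(e) X^{m-ℓ}` and exchanging the two sums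
gives the formula.
-/

open Polynomial Finset

/-- The complete homogeneous symmetric polynomial `h_d(a_0, …, a_{t-1})`, written as
the sum over weakly increasing functions `Fin d → Fin t` (i.e. over degree-`d`
monomials in `t` variables) of the corresponding products. -/
noncomputable def hsymm (a : ℕ → ℝ) (t d : ℕ) : ℝ :=
  ∑ f : {f : Fin d → Fin t // ∀ i j, i ≤ j → f i ≤ f j}, ∏ i : Fin d, a (f.1 i : ℕ)

/-- The elementary symmetric polynomial `σ_ℓ(e_0, …, e_{m-1})`. -/
noncomputable def esymm (e : ℕ → ℝ) (m ℓ : ℕ) : ℝ :=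
  ∑ T ∈ (Finset.range m).powersetCard ℓ, ∏ i ∈ T, e i

open Lagrange

section Newton

variable {R : Type*} [CommRing R]

theorem X_mul_nodal_range (a : ℕ → R) (k : ℕ) :
    X * nodal (range k) a = nodal (range (k + 1)) a + C (a k) * nodal (range k) a := by
  rw [nodal_eq, nodal_eq, prod_range_succ]; ring

theorem linearIndependent_nodal_range [IsDomain R] (a : ℕ → R) :
    LinearIndependent R fun k => nodal (range k) a :=
  (⟨fun k => nodal (range k) a, fun k => by rw [degree_nodal, card_range]⟩ :
    Polynomial.Sequence R).linearIndependent

theorem eq_of_sum_C_mul_nodal_range_eq [IsDomain R] {a c d : ℕ → R} {n : ℕ}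
    (h : ∑ k ∈ range n, C (c k) * nodal (range k) a = ∑ k ∈ range n, C (d k) * nodal (range k) a)
    {k : ℕ} (hk : k < n) : c k = d k := by
  refine sub_eq_zero.mp <| linearIndependent_iff'.mp (linearIndependent_nodal_range a)
    (range n) (c - d) ?_ k (mem_range.mpr hk)
  simp only [Pi.sub_apply, sub_smul, sum_sub_distrib, smul_eq_C_mul, h, sub_self]

end Newton

theorem prod_X_sub_C_eq_sum_esymm (e : ℕ → ℝ) (m : ℕ) :
    ∏ i ∈ range m, (X - C (e i)) =
      ∑ ℓ ∈ range (m + 1), C ((-1) ^ ℓ * esymm e m ℓ) * X ^ (m - ℓ) := by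
  have := Multiset.prod_X_sub_X_eq_sum_esymm ((range m).val.map e)
  simp only [Multiset.map_map, Function.comp_def, Multiset.card_map, card_val, card_range,
    Finset.esymm_map_val] at this
  rw [Finset.prod, this]
  refine sum_congr rfl fun ℓ _ => ?_
  rw [esymm]; simp only [map_mul, map_pow, map_neg, map_one]; ring

theorem hsymm_zero_right (a : ℕ → ℝ) (t : ℕ) : hsymm a t 0 = 1 := by
  simp [hsymm]

theorem hsymm_zero_succ (a : ℕ → ℝ) (d : ℕ) : hsymm a 0 (d + 1) = 0 := by
  have : IsEmpty {f : Fin (d + 1) → Fin 0 // ∀ i j, i ≤ j → f i ≤ f j} := ⟨fun f => (f.1 0).elim0⟩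
  simp [hsymm]

theorem sum_filter_last_eq_last {t d : ℕ} (a : ℕ → ℝ) :
    ∑ f ∈ univ.filter (fun f : {f : Fin (d + 1) → Fin (t + 1) // ∀ i j, i ≤ j → f i ≤ f j} =>
      f.1 (Fin.last d) = Fin.last t), ∏ i, a (f.1 i) = a t * hsymm a (t + 1) d := by
  rw [hsymm, mul_sum]
  refine sum_bij' (fun f _ => ⟨fun i => f.1 i.castSucc, fun i j hij => f.2 _ _ (by simpa)⟩)
    (fun g _ => ⟨Fin.snoc g.1 (Fin.last t), fun i j hij => ?_⟩)
    (fun _ _ => mem_univ _) (fun g _ => by simp) (fun f hf => ?_) (fun g _ => ?_) (fun f hf => ?_)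
  · rcases Fin.eq_castSucc_or_eq_last j with ⟨j, rfl⟩ | rfl
    · rcases Fin.eq_castSucc_or_eq_last i with ⟨i, rfl⟩ | rfl
      · simpa using g.2 i j (by simpa using hij)
      · exact absurd hij (Fin.castSucc_lt_last j).not_ge
    · simp [Fin.le_last]
  · ext1; dsimp only; rw [← (mem_filter.mp hf).2]; exact Fin.snoc_init_self _
  · ext1; simp
  · rw [Fin.prod_univ_castSucc, (mem_filter.mp hf).2, mul_comm]; rfl

theorem sum_filter_last_ne_last {t d : ℕ} (a : ℕ → ℝ) :
    ∑ f ∈ univ.filter (fun f : {f : Fin (d + 1) → Fin (t + 1) // ∀ i j, i ≤ j → f i ≤ f j} =>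
      f.1 (Fin.last d) ≠ Fin.last t), ∏ i, a (f.1 i) = hsymm a t (d + 1) := by
  rw [hsymm]
  refine sum_bij'
    (fun f hf => ⟨fun i => (f.1 i).castPred fun h => (mem_filter.mp hf).2
        (le_antisymm (Fin.le_last _) (h ▸ f.2 i (Fin.last d) (Fin.le_last i))),
      fun i j hij => Fin.castPred_le_castPred_iff.mpr (f.2 i j hij)⟩)
    (fun g _ => ⟨fun i => (g.1 i).castSucc, fun i j hij => by simpa using g.2 i j hij⟩)
    (fun _ _ => mem_univ _) (fun g _ => by simp [(Fin.castSucc_lt_last _).ne])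
    (fun f hf => by ext1; simp) (fun g _ => by ext1; simp) (fun f hf => by simp)

theorem hsymm_succ_succ (a : ℕ → ℝ) (t d : ℕ) :
    hsymm a (t + 1) (d + 1) = hsymm a t (d + 1) + a t * hsymm a (t + 1) d := by
  rw [add_comm (hsymm a t (d + 1)), ← sum_filter_last_eq_last, ← sum_filter_last_ne_last (t := t)]
  exact (sum_filter_add_sum_filter_not _ _ _).symm

theorem X_pow_eq_sum_hsymm_mul_nodal (a : ℕ → ℝ) (n : ℕ) :
    (X ^ n : ℝ[X]) = ∑ k ∈ range (n + 1), C (hsymm a (k + 1) (n - k)) * nodal (range k) a := by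
  induction n with
  | zero => simp [hsymm_zero_right, nodal]
  | succ n ih =>
    have pascal : ∀ k ∈ range (n + 1), C (hsymm a (k + 1) (n + 1 - k)) * nodal (range k) a =
        C (hsymm a k (n + 1 - k)) * nodal (range k) a +
          C (hsymm a (k + 1) (n - k)) * (C (a k) * nodal (range k) a) := by
      intro k hk
      rw [Nat.sub_add_comm (mem_range_succ_iff.mp hk), hsymm_succ_succ, map_add, map_mul]
      ring
    have shift : ∑ k ∈ range (n + 1), C (hsymm a k (n + 1 - k)) * nodal (range k) a +
        nodal (range (n + 1)) a =
        ∑ k ∈ range (n + 1), C (hsymm a (k + 1) (n - k)) * nodal (range (k + 1)) a := by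
      rw [sum_range_succ', sum_range_succ, Nat.sub_zero, hsymm_zero_succ, Nat.sub_self,
        hsymm_zero_right]
      simp only [Nat.add_sub_add_right, map_zero, zero_mul, add_zero, map_one, one_mul]
    rw [pow_succ', ih, mul_sum, sum_range_succ _ (n + 1), sum_congr rfl pascal, sum_add_distrib,
      Nat.sub_self, hsymm_zero_right, map_one, one_mul, add_right_comm, shift,
      ← sum_add_distrib]
    refine sum_congr rfl fun k _ => ?_
    rw [mul_left_comm, X_mul_nodal_range]; ring

theorem prod_X_sub_C_eq_sum_C_mul_nodal (a e : ℕ → ℝ) (m : ℕ) :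
    ∏ i ∈ range m, (X - C (e i)) = ∑ k ∈ range (m + 1),
      C (∑ ℓ ∈ range (m - k + 1), (-1) ^ ℓ * hsymm a (k + 1) (m - k - ℓ) * esymm e m ℓ) *
        nodal (range k) a := by
  simp_rw [prod_X_sub_C_eq_sum_esymm, X_pow_eq_sum_hsymm_mul_nodal a, mul_sum, map_sum, sum_mul]
  refine sum_comm' (fun ℓ k => ?_) |>.trans (sum_congr rfl fun k _ => sum_congr rfl fun ℓ _ => ?_)
  · simp only [mem_range]; omega
  · rw [Nat.sub_right_comm]; simp only [map_mul]; ring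

/-- `S^{a,e}(m,k) = ∑_{ℓ=0}^{m-k} (-1)^ℓ h_{m-k-ℓ}(a_1, …, a_{k+1}) σ_ℓ(e_1, …, e_m)`. -/
theorem stmt10 (a e : ℕ → ℝ) (S : ℕ → ℕ → ℝ) (hS : SaeRel a e S)
    (m k : ℕ) (hkm : k ≤ m) :
    S m k = ∑ ℓ ∈ Finset.range (m - k + 1),
      (-1 : ℝ) ^ ℓ * hsymm a (k + 1) (m - k - ℓ) * esymm e m ℓ :=
  eq_of_sum_C_mul_nodal_range_eq ((hS.2 m).symm.trans (prod_X_sub_C_eq_sum_C_mul_nodal a e m))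
    (Nat.lt_succ_of_le hkm)
end

section
/- Let a = (a_1, a_2, ...) and e = (e_1, e_2, ...) be arbitrary real sequences satisfying a_i ≥ e_j for all i, j (i.e., inf a ≥ sup e). Then the matrix S^{a,e} = [S^{a,e}(m,k)]_{m,k ≥ 0} is totally non-negative. -/
/-!
Splitting off the first factor and using
`(X - e₀) ∏_{i<k} (X - aᵢ) = ∏_{i<k+1} (X - aᵢ) + (a_k - e₀) ∏_{i<k} (X - aᵢ)`,
row `m + 1` of `S^{a,e}` is row `m` of `S^{a,e'}`, with `e'` the shifted sequence, times the upper
bidiagonal matrix with entries `1` and `a_k - e₀ ≥ 0`, while row `0` is the first unit vector.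
After this multiplication each column of a minor is a nonnegative combination of two adjacent
columns, so by multilinearity the minor is a nonnegative combination of minors with weakly
increasing columns. Prepending a unit row keeps minors nonnegative by Laplace expansion, and an
induction on the number of rows concludes.
-/

open Polynomial Finset

namespace TotallyNonneg

variable {M : ℕ → ℕ → ℝ}

theorem det_nonneg_of_monotone (hM : TotallyNonneg M) {p : ℕ} {r c : Fin p → ℕ}
    (hr : Monotone r) (hc : Monotone c) : 0 ≤ (Matrix.of fun i j => M (r i) (c j)).det := by
  by_cases hri : Function.Injective r
  · by_cases hci : Function.Injective c
    · exact hM p r c (hr.strictMono_of_injective hri) (hc.strictMono_of_injective hci)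
    · obtain ⟨j, j', hjj', hne⟩ : ∃ j j', c j = c j' ∧ j ≠ j' := by
        simpa [Function.Injective] using hci
      rw [Matrix.det_zero_of_column_eq hne fun i => by simp [hjj']]
  · obtain ⟨i, i', hii', hne⟩ : ∃ i i', r i = r i' ∧ i ≠ i' := by
      simpa [Function.Injective] using hri
    rw [Matrix.det_zero_of_row_eq hne (funext fun j => by simp [hii'])]

theorem add_mul_col_succ (hM : TotallyNonneg M) {f : ℕ → ℝ} (hf : ∀ k, 0 ≤ f k) :
    TotallyNonneg fun m k => M m k + f k * M m (k + 1) := by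
  classical
  intro p r c hr hc
  rw [← Matrix.det_transpose]
  have hsplit : (Matrix.of fun i j => M (r i) (c j) + f (c j) * M (r i) (c j + 1)).transpose =
      (fun j i => M (r i) (c j)) + fun j i => f (c j) * M (r i) (c j + 1) := by
    ext j i
    simp
  rw [hsplit]
  change 0 ≤ Matrix.detRowAlternating _
  rw [AlternatingMap.map_add_univ]
  refine Finset.sum_nonneg fun s _ => ?_
  -- each term: columns `c j` for `j ∈ s` and `c j + 1` otherwise, still weakly increasing
  set c' : Fin p → ℕ := fun j => if j ∈ s then c j else c j + 1
  have hterm : s.piecewise (fun j i => M (r i) (c j)) (fun j i => f (c j) * M (r i) (c j + 1)) =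
      (Matrix.of fun i j => (if j ∈ s then 1 else f (c j)) * M (r i) (c' j)).transpose := by
    ext j i
    by_cases hj : j ∈ s <;> simp [hj, c']
  have hc' : Monotone c' := by
    intro j j' hjj'
    rcases hjj'.lt_or_eq with hlt | rfl
    · have := hc hlt
      simp only [c']
      split_ifs <;> omega
    · rfl
  have hdet := Matrix.det_mul_row (fun j => if j ∈ s then (1 : ℝ) else f (c j))
    (Matrix.of fun i j => M (r i) (c' j))
  simp only [Matrix.of_apply] at hdet
  rw [hterm]
  change 0 ≤ Matrix.det _
  rw [Matrix.det_transpose, hdet]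
  refine mul_nonneg (Finset.prod_nonneg fun j _ => ?_) (hM.det_nonneg_of_monotone hr.monotone hc')
  split_ifs
  exacts [zero_le_one, hf _]

theorem cons_zero_col (hM : TotallyNonneg M) :
    TotallyNonneg fun m k => if k = 0 then 0 else M m (k - 1) := by
  intro p r c hr hc
  by_cases hc0 : ∃ j, c j = 0
  · obtain ⟨j, hj⟩ := hc0
    rw [Matrix.det_eq_zero_of_column_eq_zero j fun i => by simp [hj]]
  · push Not at hc0
    simp only [hc0, if_false]
    exact hM p r (fun j => c j - 1) hr fun j j' hjj' => by
      have := hc hjj'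
      have := hc0 j
      simp only
      omega

theorem cons_unit_row (hM : TotallyNonneg M) :
    TotallyNonneg fun m k => if m = 0 then (if k = 0 then 1 else 0) else M (m - 1) k := by
  intro p r c hr hc
  by_cases hr0 : ∃ i, r i = 0
  · obtain ⟨i₀, hi₀⟩ := hr0
    cases p with
    | zero => exact i₀.elim0
    | succ p =>
      have hr0 : r 0 = 0 := by have := hr.monotone (Fin.zero_le i₀); omega
      have hr_succ : ∀ i : Fin p, r i.succ ≠ 0 := fun i => by have := hr (Fin.succ_pos i); omega
      by_cases hc0 : c 0 = 0
      · have hc_succ : ∀ j : Fin p, c j.succ ≠ 0 := fun j => by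
          have := hc (Fin.succ_pos j)
          omega
        rw [Matrix.det_succ_row_zero, Fin.sum_univ_succ,
          Finset.sum_eq_zero fun j _ => by simp [hr0, hc_succ j]]
        simpa [hr0, hc0, hr_succ, Matrix.submatrix] using
          hM p (fun i => r i.succ - 1) (fun j => c j.succ)
            (fun i i' h => by
              have := hr (Fin.succ_lt_succ_iff.2 h)
              have := hr_succ i
              simp only
              omega)
            (hc.comp Fin.strictMono_succ)
      · rw [Matrix.det_eq_zero_of_row_eq_zero 0 fun j => by
          have := hc.monotone (Fin.zero_le j); simp [hr0]; omega]
  · push Not at hr0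
    simp only [hr0, if_false]
    refine hM p (fun i => r i - 1) c (fun i i' h => ?_) hc
    have := hr h
    have := hr0 i
    simp only
    omega

end TotallyNonneg

theorem totallyNonneg_zero : TotallyNonneg fun _ _ => 0 := by
  intro p r c _ _
  cases p with
  | zero => simp
  | succ p => exact (Matrix.det_eq_zero_of_row_eq_zero 0 fun _ => rfl).ge

noncomputable def saeNum (a : ℕ → ℝ) : (ℕ → ℝ) → ℕ → ℕ → ℝ
  | _, 0, k => if k = 0 then 1 else 0
  | e, m + 1, k => (if k = 0 then 0 else saeNum a (fun i => e (i + 1)) m (k - 1)) +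
      (a k - e 0) * saeNum a (fun i => e (i + 1)) m k

theorem saeNum_eq_zero_of_lt (a : ℕ → ℝ) {m k : ℕ} (hmk : m < k) (e : ℕ → ℝ) :
    saeNum a e m k = 0 := by
  induction m generalizing e k with
  | zero => simp [saeNum, hmk.ne']
  | succ m ih =>
    simp only [saeNum, ih (show m < k by omega), ih (show m < k - 1 by omega)]
    simp

theorem prod_X_sub_C_eq_sum_saeNum (a e : ℕ → ℝ) (m : ℕ) :
    ∏ i ∈ range m, (X - C (e i)) =
      ∑ k ∈ range (m + 1), C (saeNum a e m k) * ∏ i ∈ range k, (X - C (a i)) := by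
  induction m generalizing e with
  | zero => simp [saeNum]
  | succ m ih =>
    set P : ℕ → ℝ[X] := fun k => ∏ i ∈ range k, (X - C (a i))
    set T := saeNum a (fun i => e (i + 1)) m
    have hstep : ∀ k, P k * (X - C (e 0)) = P (k + 1) + C (a k - e 0) * P k := fun k => by
      simp only [P, prod_range_succ, map_sub]
      ring
    calc ∏ i ∈ range (m + 1), (X - C (e i))
        = (∑ k ∈ range (m + 1), C (T k) * P k) * (X - C (e 0)) := by
          rw [prod_range_succ', ih]
      _ = ∑ k ∈ range (m + 1), C (T k) * P (k + 1) +
            ∑ k ∈ range (m + 1), C ((a k - e 0) * T k) * P k := by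
          simp only [sum_mul, mul_assoc, hstep, mul_add, sum_add_distrib]
          exact congrArg _ (sum_congr rfl fun k _ => by rw [map_mul]; ring)
      _ = ∑ k ∈ range (m + 2), C (saeNum a e (m + 1) k) * P k := by
          simp only [saeNum, map_add, add_mul, sum_add_distrib]
          rw [sum_range_succ' _ (m + 1), sum_range_succ _ (m + 1),
            saeNum_eq_zero_of_lt a (Nat.lt_succ_self m)]
          simp [T]

theorem linearIndependent_prod_X_sub_C (a : ℕ → ℝ) :
    LinearIndependent ℝ fun k => ∏ i ∈ range k, (X - C (a i)) :=
  (⟨fun k => ∏ i ∈ range k, (X - C (a i)), fun k => by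
    simp [degree_prod]⟩ : Polynomial.Sequence ℝ).linearIndependent

theorem SaeRel.eq_saeNum {a e : ℕ → ℝ} {S : ℕ → ℕ → ℝ} (hS : SaeRel a e S) :
    S = saeNum a e := by
  funext m k
  rcases lt_or_ge m k with hmk | hkm
  · rw [hS.1 m k hmk, saeNum_eq_zero_of_lt a hmk]
  · have hrow :
        ∑ j ∈ range (m + 1), (S m j - saeNum a e m j) • ∏ i ∈ range j, (X - C (a i)) = 0 := by
      simp only [sub_smul, sum_sub_distrib, smul_eq_C_mul, ← hS.2 m,
        ← prod_X_sub_C_eq_sum_saeNum, sub_self]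
    have := linearIndependent_iff'.1 (linearIndependent_prod_X_sub_C a) _ _ hrow k
      (mem_range.2 (Nat.lt_succ_of_le hkm))
    linarith

theorem totallyNonneg_saeNum_rows_lt {a e : ℕ → ℝ} (he : ∀ i j, e j ≤ a i) (N : ℕ) :
    TotallyNonneg fun m k => if m < N then saeNum a e m k else 0 := by
  induction N generalizing e with
  | zero => simpa using totallyNonneg_zero
  | succ N ih =>
    have hTN := ((ih (e := fun i => e (i + 1)) fun i j => he i (j + 1)).cons_zero_col
      |>.add_mul_col_succ (f := fun k => a k - e 0) fun k => sub_nonneg.2 (he k 0)).cons_unit_row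
    convert hTN using 1
    funext m k
    rcases m with _ | m
    · simp [saeNum]
    · by_cases hm : m < N <;> simp [saeNum, hm]

theorem totallyNonneg_saeNum {a e : ℕ → ℝ} (h : ∀ i j, e j ≤ a i) :
    TotallyNonneg (saeNum a e) := by
  intro p r c hr hc
  have hrN : ∀ i, r i < univ.sup r + 1 := fun i => Nat.lt_succ_of_le (le_sup (mem_univ i))
  simpa [hrN] using totallyNonneg_saeNum_rows_lt h (univ.sup r + 1) p r c hr hc

theorem stmt12 (a e : ℕ → ℝ) (h : ∀ i j : ℕ, e j ≤ a i)
    (S : ℕ → ℕ → ℝ) (hS : SaeRel a e S) :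
    TotallyNonneg S := by
  rw [hS.eq_saeNum]
  exact totallyNonneg_saeNum h
end

section
/- Let G be a chordal graph on n vertices with perfect elimination order v_1, ..., v_n, for 1 ≤ m ≤ n let G_m be the subgraph of G induced by v_1, ..., v_m, and for each i let e_i be the number of neighbors of v_i among v_1, ..., v_{i-1}. Then for every positive integer x and every 1 ≤ m ≤ n, the number of proper colorings of G_m using colors from a palette of x colors (colorings in which adjacent vertices receive distinct colors) equals ∏_{i=1}^m (x - e_i). -/
/-!
Colour `v_1, …, v_m` one vertex at a time. When `v_m` is reached, its `e_m` earlier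
neighbours form a clique, so any proper colouring of `G_{m-1}` gives them `e_m` distinct
colours; hence every proper colouring of `G_{m-1}` extends in exactly `x - e_m` ways.
-/

open Finset

lemma Fin.eq_mk_of_lt_succ_of_not_lt {n m : ℕ} {v : Fin n} (hv : (v : ℕ) < m + 1)
    (h : ¬ (v : ℕ) < m) (hm : m < n) : v = ⟨m, hm⟩ :=
  Fin.ext (Nat.le_antisymm (Nat.lt_succ_iff.mp hv) (not_lt.mp h))

abbrev PrefixColoring {n : ℕ} (G : SimpleGraph (Fin n)) (x m : ℕ) : Type :=
  {c : {v : Fin n // (v : ℕ) < m} → Fin x //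
    ∀ u w : {v : Fin n // (v : ℕ) < m}, G.Adj u.1 w.1 → c u ≠ c w}

namespace PrefixColoring

variable {n : ℕ} {G : SimpleGraph (Fin n)} [DecidableRel G.Adj] {x m : ℕ}

def restrict (c : PrefixColoring G x (m + 1)) : PrefixColoring G x m :=
  ⟨fun v => c.1 ⟨v.1, Nat.lt_succ_of_lt v.2⟩,
    fun u w h => c.2 ⟨u.1, Nat.lt_succ_of_lt u.2⟩ ⟨w.1, Nat.lt_succ_of_lt w.2⟩ h⟩

def forbidden (hm : m < n) (c : PrefixColoring G x m) : Finset (Fin x) :=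
  (univ.filter fun j : {v : Fin n // (v : ℕ) < m} => G.Adj j.1 ⟨m, hm⟩).image c.1

def extend (hm : m < n) (c : PrefixColoring G x m) (a : Fin x) (ha : a ∉ c.forbidden hm) :
    PrefixColoring G x (m + 1) :=
  ⟨fun v => if h : (v.1 : ℕ) < m then c.1 ⟨v.1, h⟩ else a, by
    have avoids : ∀ j : {v : Fin n // (v : ℕ) < m}, G.Adj j.1 ⟨m, hm⟩ → c.1 j ≠ a :=
      fun j hj hja => ha <| mem_image.2 ⟨j, by simpa using hj, hja⟩
    rintro ⟨u, hu⟩ ⟨w, hw⟩ (huw : G.Adj u w)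
    by_cases hum : (u : ℕ) < m <;> by_cases hwm : (w : ℕ) < m <;>
      simp only [dif_pos, dif_neg, hum, hwm, not_false_eq_true]
    · exact c.2 ⟨u, hum⟩ ⟨w, hwm⟩ huw
    · exact avoids ⟨u, hum⟩ (Fin.eq_mk_of_lt_succ_of_not_lt hw hwm hm ▸ huw)
    · exact (avoids ⟨w, hwm⟩ (Fin.eq_mk_of_lt_succ_of_not_lt hu hum hm ▸ huw.symm)).symm
    · exact (G.ne_of_adj huw (Fin.ext (by omega))).elim⟩

def succEquiv (hm : m < n) :
    PrefixColoring G x (m + 1) ≃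
      Σ c : PrefixColoring G x m, {a : Fin x // a ∉ c.forbidden hm} where
  toFun d := ⟨d.restrict, d.1 ⟨⟨m, hm⟩, lt_add_one m⟩, by
    simp only [forbidden, mem_image, mem_filter, mem_univ, true_and, not_exists, not_and]
    exact fun j hj => d.2 ⟨j.1, Nat.lt_succ_of_lt j.2⟩ _ hj⟩
  invFun p := extend hm p.1 p.2.1 p.2.2
  left_inv d := by
    refine Subtype.ext (funext fun ⟨v, hv⟩ => ?_)
    by_cases h : (v : ℕ) < m
    · simp only [extend, restrict, dif_pos h]
    · simp only [extend, dif_neg h]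
      obtain rfl := Fin.eq_mk_of_lt_succ_of_not_lt hv h hm
      rfl
  right_inv p :=
    Sigma.subtype_ext (Subtype.ext (funext fun v => dif_pos v.2)) (dif_neg (lt_irrefl m))

lemma card_forbidden (hG : IsPEO G) (hm : m < n) (c : PrefixColoring G x m) :
    #(c.forbidden hm) = earlierNbrs G ⟨m, hm⟩ := by
  have clique_inj :
      Set.InjOn c.1
        (univ.filter fun j : {v : Fin n // (v : ℕ) < m} => G.Adj j.1 ⟨m, hm⟩) := by
    intro j hj k hk hjk
    by_contra hne
    exact c.2 j k (hG _ _ _ j.2 k.2 (Subtype.coe_injective.ne hne)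
      (mem_filter.1 hj).2 (mem_filter.1 hk).2) hjk
  rw [forbidden, card_image_of_injOn clique_inj, ← Fintype.card_subtype,
    ← Nat.card_eq_fintype_card]
  exact Nat.card_congr (Equiv.subtypeSubtypeEquivSubtypeInter (fun v : Fin n => (v : ℕ) < m)
    (G.Adj · ⟨m, hm⟩))

lemma card_succ (hG : IsPEO G) (hm : m < n) :
    (Nat.card (PrefixColoring G x (m + 1)) : ℝ) =
      Nat.card (PrefixColoring G x m) * ((x : ℝ) - earlierNbrs G ⟨m, hm⟩) := by
  have card_allowed (c : PrefixColoring G x m) :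
      (Nat.card {a : Fin x // a ∉ c.forbidden hm} : ℝ) = x - earlierNbrs G ⟨m, hm⟩ := by
    rw [Nat.card_eq_fintype_card, Fintype.card_subtype_compl, Fintype.card_coe,
      Fintype.card_fin, Nat.cast_sub (by simpa using (c.forbidden hm).card_le_univ),
      card_forbidden hG]
  rw [Nat.card_congr (succEquiv hm), Nat.card_sigma, Nat.cast_sum,
    sum_congr rfl fun c _ => card_allowed c, sum_const, card_univ, nsmul_eq_mul,
    Nat.card_eq_fintype_card]

end PrefixColoring

theorem stmt17_general {n : ℕ} (G : SimpleGraph (Fin n)) (hG : IsPEO G)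
    (x : ℕ) (m : ℕ) (hmn : m ≤ n) :
    (Nat.card {c : {v : Fin n // (v : ℕ) < m} → Fin x //
        ∀ u w : {v : Fin n // (v : ℕ) < m}, G.Adj u.1 w.1 → c u ≠ c w} : ℝ) =
      ∏ i ∈ Finset.range m, ((x : ℝ) - eSeq G i) := by
  classical
  induction m with
  | zero => simp
  | succ m ih =>
    have hm : m < n := hmn
    rw [PrefixColoring.card_succ hG hm, prod_range_succ, ih hm.le, eSeq, dif_pos hm]

/-- For a chordal graph `G` with perfect elimination order `v_1, …, v_n`, the number of
proper colorings of the induced subgraph `G_m` (on the first `m` vertices) with a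
palette of `x` colors is `∏_{i=1}^m (x - e_i)`. -/
theorem stmt17 {n : ℕ} (G : SimpleGraph (Fin n)) (hG : IsPEO G)
    (x : ℕ) (hx : 0 < x) (m : ℕ) (hm1 : 1 ≤ m) (hmn : m ≤ n) :
    (Nat.card {c : {v : Fin n // (v : ℕ) < m} → Fin x //
        ∀ u w : {v : Fin n // (v : ℕ) < m}, G.Adj u.1 w.1 → c u ≠ c w} : ℝ) =
      ∏ i ∈ Finset.range m, ((x : ℝ) - eSeq G i) :=
  stmt17_general G hG x m hmn
end
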